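/- arXiv:2404.09224 — 7 statements merged into one kernel-verified Lean document; each statement's English description precedes it below -/
import Mathlib

section
/- Let A be a semiprime unital ring and L ⊆ A a left ideal. Then L contains a Fredholm element (i.e., an element whose image in A/soc(A) is invertible) if and only if there exists an idempotent p ∈ soc(A) such that L = A(1-p). -/
open MulOpposite Submodule

/-- The length of a module: the supremum of lengths of chains of submodules. -/
noncomputable def mlen (R M : Type*) [Ring R] [AddCommGroup M] [Module R M] : ℕ∞ :=
  WithBot.unbotD 0 (Order.krullDim (Submodule R M))

/-- A ring is semiprime if it has no nonzero nilpotent (two-sided) ideals;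
equivalently, `a A a = 0` implies `a = 0`. -/
def IsSemiprimeRing (A : Type*) [Ring A] : Prop :=
  ∀ a : A, (∀ x : A, a * x * a = 0) → a = 0

/-- The (left) socle of a ring: the sum of all minimal left ideals. -/
noncomputable def socle (A : Type*) [Ring A] : Submodule A A :=
  sSup {m : Submodule A A | IsAtom m}

/-- An element is Fredholm if its image in `A/soc(A)` is invertible. -/
def IsFredholmElem {A : Type*} [Ring A] (a : A) : Prop :=
  ∃ b : A, a * b - 1 ∈ socle A ∧ b * a - 1 ∈ socle A

/-- A left ideal is Fredholm if it contains a Fredholm element. -/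
def IsFredholmLeftIdeal {A : Type*} [Ring A] (L : Submodule A A) : Prop :=
  ∃ a ∈ L, IsFredholmElem a

/-- The right annihilator of a set, as a right ideal (`Aᵐᵒᵖ`-submodule of `A`). -/
def rAnn {A : Type*} [Ring A] (S : Set A) : Submodule Aᵐᵒᵖ A where
  carrier := {a | ∀ s ∈ S, s * a = 0}
  add_mem' := by intro x y hx hy s hs; rw [Set.mem_setOf_eq] at *; rw [mul_add, hx s hs, hy s hs, add_zero]
  zero_mem' := by intro s _; exact mul_zero s
  smul_mem' := by
    intro c x hx s hs
    show s * (c • x) = 0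
    rw [MulOpposite.smul_eq_mul_unop, ← mul_assoc, hx s hs, zero_mul]

/-- The left annihilator of a set, as a left ideal. -/
def lAnn {A : Type*} [Ring A] (S : Set A) : Submodule A A where
  carrier := {a | ∀ s ∈ S, a * s = 0}
  add_mem' := by intro x y hx hy s hs; rw [Set.mem_setOf_eq] at *; rw [add_mul, hx s hs, hy s hs, add_zero]
  zero_mem' := by intro s _; exact zero_mul s
  smul_mem' := by
    intro c x hx s hs
    show c * x * s = 0
    rw [mul_assoc, hx s hs, mul_zero]

/-!
If `a ∈ L` and `b * a - 1 ∈ soc(A)`, then `L + soc(A) = A`. The socle is a semisimple module, so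
`L ∩ soc(A)` has a complement inside `soc(A)`, and that complement `C` is a complement of `L` in
`A`. Splitting `1 = e + p` along `A = L ⊕ C` makes `p` idempotent and `L = A e = A (1 - p)`.
Conversely, `1 - p` is its own inverse modulo the socle.
-/

theorem Codisjoint.exists_le_isCompl {α : Type*} [Lattice α] [BoundedOrder α] {a s : α}
    [ComplementedLattice (Set.Iic s)] (h : Codisjoint a s) : ∃ c ≤ s, IsCompl a c := by
  obtain ⟨c, hc⟩ := ComplementedLattice.exists_isCompl (⟨a ⊓ s, inf_le_right⟩ : Set.Iic s)
  have hdisj : Disjoint (a ⊓ s) c := Set.Iic.disjoint_iff.mp hc.disjoint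
  have hsup : a ⊓ s ⊔ c = s := Set.Iic.codisjoint_iff.mp hc.codisjoint
  refine ⟨c, c.2, disjoint_iff_inf_le.mpr ?_, codisjoint_iff_le_sup.mpr ?_⟩
  · exact (le_inf (le_inf inf_le_left (inf_le_right.trans c.2)) inf_le_right).trans hdisj.le_bot
  · calc ⊤ = a ⊔ (a ⊓ s ⊔ c) := by rw [hsup, h.eq_top]
      _ ≤ a ⊔ c := sup_le le_sup_left (sup_le (inf_le_left.trans le_sup_left) le_sup_right)

theorem isSemisimpleModule_socle (A : Type*) [Ring A] : IsSemisimpleModule A (socle A) := by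
  rw [socle, sSup_eq_iSup]
  exact isSemisimpleModule_biSup_of_isSemisimpleModule_submodule fun m hm ↦
    have : IsSimpleModule A m := isSimpleModule_iff_isAtom.mpr hm
    inferInstance

instance complementedLattice_Iic_socle (A : Type*) [Ring A] :
    ComplementedLattice (Set.Iic (socle A)) :=
  (socle A).mapIic.complementedLattice_iff.mp
    ((isSemisimpleModule_iff A (socle A)).mp (isSemisimpleModule_socle A))

theorem codisjoint_socle_of_isFredholmLeftIdeal {A : Type*} [Ring A] {L : Submodule A A}
    (hL : IsFredholmLeftIdeal L) : Codisjoint L (socle A) := by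
  obtain ⟨a, haL, b, -, hba⟩ := hL
  rw [codisjoint_iff, Ideal.eq_top_iff_one, ← sub_sub_cancel (b * a) 1]
  exact sub_mem (mem_sup_left (L.smul_mem b haL)) (mem_sup_right hba)

theorem isFredholmElem_one_sub {A : Type*} [Ring A] {p : A} (hp : IsIdempotentElem p)
    (hps : p ∈ socle A) : IsFredholmElem (1 - p) := by
  have h : (1 - p) * (1 - p) - 1 ∈ socle A := by
    rw [hp.one_sub.eq, sub_sub_cancel_left]
    exact neg_mem hps
  exact ⟨1 - p, h, h⟩

section IsCompl

variable {A : Type*} [Ring A] {L C : Submodule A A} {e p : A}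

theorem mul_eq_self_of_isCompl (h : IsCompl L C) (he : e ∈ L) (hp : p ∈ C) (hep : e + p = 1)
    {x : A} (hx : x ∈ L) : x * e = x := by
  have hxp : x * p = 0 := by
    refine disjoint_def.mp h.symm.disjoint _ (C.smul_mem x hp) ?_
    rw [← sub_eq_of_eq_add' (by rw [← mul_add, hep, mul_one] : x = x * e + x * p)]
    exact sub_mem hx (L.smul_mem x he)
  rw [← add_zero (x * e), ← hxp, ← mul_add, hep, mul_one]

theorem exists_isIdempotentElem_eq_span_one_sub_of_isCompl (h : IsCompl L C) :
    ∃ p : A, IsIdempotentElem p ∧ p ∈ C ∧ L = span A {1 - p} := by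
  obtain ⟨e, he, p, hp, hep⟩ := mem_sup.mp (h.codisjoint.eq_top ▸ mem_top : (1 : A) ∈ L ⊔ C)
  refine ⟨p, mul_eq_self_of_isCompl h.symm hp he ((add_comm p e).trans hep) hp, hp, ?_⟩
  rw [← eq_sub_of_add_eq hep]
  refine le_antisymm (fun x hx ↦ ?_) ((span_singleton_le_iff_mem e L).mpr he)
  rw [← mul_eq_self_of_isCompl h he hp hep hx]
  exact smul_mem _ x (mem_span_singleton_self e)

end IsCompl

theorem stmt0_general (A : Type*) [Ring A] (L : Submodule A A) :
    IsFredholmLeftIdeal L ↔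
      ∃ p : A, IsIdempotentElem p ∧ p ∈ socle A ∧ L = Submodule.span A {1 - p} := by
  constructor
  · intro hL
    obtain ⟨C, hCS, hLC⟩ := (codisjoint_socle_of_isFredholmLeftIdeal hL).exists_le_isCompl
    obtain ⟨p, hp, hpC, hLp⟩ := exists_isIdempotentElem_eq_span_one_sub_of_isCompl hLC
    exact ⟨p, hp, hCS hpC, hLp⟩
  · rintro ⟨p, hp, hps, rfl⟩
    exact ⟨1 - p, mem_span_singleton_self _, isFredholmElem_one_sub hp hps⟩

theorem stmt0 (A : Type*) [Ring A] (hA : IsSemiprimeRing A) (L : Submodule A A) :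
    IsFredholmLeftIdeal L ↔
      ∃ p : A, IsIdempotentElem p ∧ p ∈ socle A ∧ L = Submodule.span A {1 - p} :=
  stmt0_general A L
end

section
/- Let A be a semiprime unital ring. If L and L' are Fredholm left ideals of A, then L ∩ L' is a Fredholm left ideal. -/
open MulOpposite Submodule

/-!
In a semiprime ring every nonzero element of a minimal left ideal is von Neumann regular, so
every element `g` of such an ideal is killed from the left by some `v ≡ 1 mod soc(A)`
(namely `v = 1 - g c` with `g c g = g`). Since the elements `≡ 1 mod soc(A)` are closed under
products, any two elements `s, s'` of the socle have a common left annihilator `v ≡ 1`.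
Taking `s = 1 - b a`, `s' = 1 - b' a'` with `a ∈ L`, `a' ∈ L'` Fredholm gives
`v = v b a ∈ L` and `v = v b' a' ∈ L'`, and `v` is Fredholm.
-/

theorem Submodule.map_eq_bot_or_isAtom {R M N : Type*} [Ring R] [AddCommGroup M] [Module R M]
    [AddCommGroup N] [Module R N] (f : M →ₗ[R] N) {m : Submodule R M} (hm : IsAtom m) :
    m.map f = ⊥ ∨ IsAtom (m.map f) := by
  have := isSimpleModule_iff_isAtom.mpr hm
  rw [← m.range_subtype, ← LinearMap.range_comp, ← isSimpleModule_iff_isAtom]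
  obtain inj | eq := (f ∘ₗ m.subtype).injective_or_eq_zero
  · exact .inr (IsSimpleModule.congr (LinearEquiv.ofInjective _ inj).symm)
  · exact .inl (by rw [eq, LinearMap.range_zero])

section Socle

variable {A : Type*} [Ring A]

theorem mul_mem_socle {s : A} (hs : s ∈ socle A) (y : A) : s * y ∈ socle A := by
  have : socle A ≤ (socle A).comap (LinearMap.toSpanSingleton A A y) :=
    sSup_le fun m hm => map_le_iff_le_comap.mp <|
      ((m.map_eq_bot_or_isAtom _ hm).elim (fun h => h ▸ bot_le) fun h => le_sSup h)
  exact this hs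

theorem Submodule.one_sub_mul_mem (I : Submodule A A) {u v : A} (hv : 1 - v ∈ I)
    (hu : 1 - u ∈ I) : 1 - v * u ∈ I := by
  have : 1 - v * u = (1 - v) + v * (1 - u) := by noncomm_ring
  rw [this]
  exact I.add_mem hv (I.smul_mem v hu)

theorem isFredholmElem_of_one_sub_mem_socle {v : A} (hv : 1 - v ∈ socle A) :
    IsFredholmElem v :=
  ⟨1, by simpa using (socle A).neg_mem hv, by simpa using (socle A).neg_mem hv⟩

theorem mem_of_mul_one_sub_mul_eq_zero {L : Submodule A A} {a b v : A} (ha : a ∈ L)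
    (hv : v * (1 - b * a) = 0) : v ∈ L := by
  have : v = v * b * a := by rwa [mul_sub, mul_one, sub_eq_zero, ← mul_assoc] at hv
  rw [this]
  exact L.smul_mem _ ha

/-- Semiprimeness gives `b z b ≠ 0`. Minimality of `I` then gives `A (b z b) = I`, so
`z b = c b z b`, and makes right multiplication by `z b` injective on `I`; apply it to
`b - b c b`. -/
theorem IsSemiprimeRing.exists_mul_mul_eq_of_mem_atom (hA : IsSemiprimeRing A)
    {I : Submodule A A} (hI : IsAtom I) {b : A} (hb : b ∈ I) (hb0 : b ≠ 0) :
    ∃ c, b * c * b = b := by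
  obtain ⟨z, hz⟩ : ∃ z, b * z * b ≠ 0 := by
    by_contra! h
    exact hb0 (hA b h)
  have hzb : z * b ∈ I := I.smul_mem z hb
  have hbzb : b * z * b ∈ I := by simpa [mul_assoc] using I.smul_mem b hzb
  have hspan : span A {b * z * b} = I :=
    (hI.le_iff_eq (by simpa [span_singleton_eq_bot] using hz)).mp
      (span_singleton_le_iff_mem _ _ |>.mpr hbzb)
  obtain ⟨c, hc⟩ := mem_span_singleton.mp (hspan ▸ hzb : z * b ∈ span A {b * z * b})
  have hK : I ⊓ lAnn {z * b} = ⊥ :=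
    hI.lt_iff.mp <| inf_le_left.lt_of_ne fun h => by
      have : b ∈ I ⊓ lAnn {z * b} := by rw [h]; exact hb
      exact hz (by simpa [mul_assoc] using this.2 _ rfl)
  have hmem : b - b * c * b ∈ I ⊓ lAnn {z * b} := by
    refine ⟨I.sub_mem hb (I.smul_mem (b * c) hb), ?_⟩
    rintro _ rfl
    rw [smul_eq_mul] at hc
    calc (b - b * c * b) * (z * b) = b * z * b - b * (c * (b * z * b)) := by noncomm_ring
      _ = 0 := by rw [hc, ← mul_assoc, sub_self]
  rw [hK, mem_bot, sub_eq_zero] at hmem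
  exact ⟨c, hmem.symm⟩

theorem IsSemiprimeRing.exists_one_sub_mem_socle_mul_eq_zero_of_mem_atom (hA : IsSemiprimeRing A)
    {I : Submodule A A} (hI : IsAtom I) {b : A} (hb : b ∈ I) :
    ∃ v, 1 - v ∈ socle A ∧ v * b = 0 := by
  rcases eq_or_ne b 0 with rfl | hb0
  · exact ⟨1, by simp, mul_zero 1⟩
  obtain ⟨c, hc⟩ := hA.exists_mul_mul_eq_of_mem_atom hI hb hb0
  refine ⟨1 - b * c, by simpa using mul_mem_socle ((le_sSup hI : I ≤ socle A) hb) c, ?_⟩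
  rw [sub_mul, one_mul, hc, sub_self]

/-- The factor `u ≡ 1 mod socle A` makes the statement strong enough to pass through sums:
for `x + y`, first kill `u * x` by `v`, then kill `v * u * y` by `w`. -/
theorem IsSemiprimeRing.exists_one_sub_mem_socle_mul_mul_eq_zero (hA : IsSemiprimeRing A)
    {x : A} (hx : x ∈ socle A) {u : A} (hu : 1 - u ∈ socle A) :
    ∃ v, 1 - v ∈ socle A ∧ v * u * x = 0 := by
  rw [socle, sSup_eq_iSup'] at hx
  induction hx using Submodule.iSup_induction' generalizing u with
  | mem I x hx =>
    obtain ⟨v, hv, hvx⟩ :=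
      hA.exists_one_sub_mem_socle_mul_eq_zero_of_mem_atom I.2 (I.1.smul_mem u hx)
    exact ⟨v, hv, by rwa [mul_assoc]⟩
  | zero => exact ⟨1, by simp, mul_zero _⟩
  | add x y _ _ hx hy =>
    obtain ⟨v, hv, hvx⟩ := hx hu
    obtain ⟨w, hw, hwy⟩ := hy ((socle A).one_sub_mul_mem hv hu)
    refine ⟨w * v, (socle A).one_sub_mul_mem hw hv, ?_⟩
    rw [mul_add, mul_assoc w v u, mul_assoc w (v * u) x, hvx, mul_zero, zero_add, hwy]

theorem IsSemiprimeRing.exists_one_sub_mem_socle_mul_eq_zero_and_mul_eq_zero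
    (hA : IsSemiprimeRing A) {s s' : A} (hs : s ∈ socle A) (hs' : s' ∈ socle A) :
    ∃ v, 1 - v ∈ socle A ∧ v * s = 0 ∧ v * s' = 0 := by
  obtain ⟨v, hv, hvs⟩ := hA.exists_one_sub_mem_socle_mul_mul_eq_zero hs (u := 1) (by simp)
  obtain ⟨w, hw, hwvs'⟩ := hA.exists_one_sub_mem_socle_mul_mul_eq_zero hs' hv
  refine ⟨w * v, (socle A).one_sub_mul_mem hw hv, ?_, hwvs'⟩
  rw [mul_one] at hvs
  rw [mul_assoc, hvs, mul_zero]

end Socle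

theorem stmt1 (A : Type*) [Ring A] (hA : IsSemiprimeRing A) (L L' : Submodule A A)
    (hL : IsFredholmLeftIdeal L) (hL' : IsFredholmLeftIdeal L') :
    IsFredholmLeftIdeal (L ⊓ L') := by
  obtain ⟨a, haL, b, -, hba⟩ := hL
  obtain ⟨a', haL', b', -, hba'⟩ := hL'
  obtain ⟨v, hv, hvs, hvs'⟩ := hA.exists_one_sub_mem_socle_mul_eq_zero_and_mul_eq_zero
    (by simpa using (socle A).neg_mem hba) (by simpa using (socle A).neg_mem hba')
  exact ⟨v,
    ⟨mem_of_mul_one_sub_mul_eq_zero haL hvs, mem_of_mul_one_sub_mul_eq_zero haL' hvs'⟩,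
    isFredholmElem_of_one_sub_mem_socle hv⟩
end

section
/- Let A be a semiprime unital ring and L ⊆ A a left ideal. Then L is a finite sum of minimal left ideals if and only if L has finite length as a left A-module, and in that case the minimal number of minimal left ideals needed to sum to L equals the length of L. -/
open MulOpposite Submodule

/-!
If `L = m₁ + ⋯ + mₙ` with minimal left ideals `mᵢ`, the addition map `m₁ × ⋯ × mₙ → L` is onto,
so `length L ≤ n`. When `n` is as small as possible, no `mᵢ` lies in the sum of the others; as the
`mᵢ` are atoms this makes the family independent, the map is an isomorphism and `length L = n`.

Conversely, a nonzero `L` of finite length contains a minimal left ideal `M`. By Brauer's lemma,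
semiprimeness gives a nonzero idempotent `e ∈ M`, and `L = M + {v ∈ L | v e = 0}` through
`v = v e + (v - v e)`. The second summand misses `e`, so it has smaller length, and induction on the
length decomposes `L`.
-/

open Module

theorem mlen_eq_length (R M : Type*) [Ring R] [AddCommGroup M] [Module R M] :
    mlen R M = length R M := by
  rw [mlen, ← coe_length, WithBot.unbotD_coe]

theorem Fin.iSup_cons {α : Type*} [CompleteLattice α] {n : ℕ} (a : α) (f : Fin n → α) :
    ⨆ i, (Fin.cons a f : Fin (n + 1) → α) i = a ⊔ ⨆ i, f i :=
  le_antisymm (iSup_le <| Fin.cases le_sup_left fun i => le_sup_of_le_right (le_iSup f i))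
    (sup_le (le_iSup_of_le 0 le_rfl) (iSup_le fun i => le_iSup_of_le i.succ le_rfl))

theorem iSupIndep_of_isAtom_of_forall_lt {α : Type*} [CompleteLattice α] {n : ℕ}
    {m : Fin n → α} (hm : ∀ i, IsAtom (m i))
    (hmin : ∀ k < n, ∀ m' : Fin k → α, (∀ i, IsAtom (m' i)) → ⨆ i, m' i ≠ ⨆ i, m i) :
    iSupIndep m := by
  intro j
  rw [← (hm j).not_le_iff_disjoint]
  intro hj
  obtain ⟨n, rfl⟩ : ∃ n', n = n' + 1 := Nat.exists_eq_succ_of_ne_zero j.pos.ne'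
  refine hmin n n.lt_succ_self (m ∘ j.succAbove) (fun i => hm _) <|
    le_antisymm (iSup_le fun i => le_iSup m _) (iSup_le fun i => ?_)
  have hrest : ⨆ (k) (_ : k ≠ j), m k ≤ ⨆ i, m (j.succAbove i) :=
    iSup₂_le fun k hk =>
      (Fin.exists_succAbove_eq hk).elim fun z hz => le_iSup_of_le z (hz ▸ le_rfl)
  by_cases hi : i = j
  · exact hi ▸ hj.trans hrest
  · exact (le_iSup₂_of_le i hi le_rfl).trans hrest

section Length

variable {R M : Type*} [Ring R] [AddCommGroup M] [Module R M]

theorem Submodule.length_lt_length_of_lt {K' K : Submodule R M} (h : K' < K)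
    (hK : length R K ≠ ⊤) : length R K' < length R K := by
  obtain ⟨_, _⟩ := isFiniteLength_iff_isNoetherian_isArtinian.mp (length_ne_top_iff.mp hK)
  rw [← (Submodule.comapSubtypeEquivOfLe h.le).length_eq]
  refine Submodule.length_lt fun htop => h.not_ge fun x hx => ?_
  simpa using (htop ▸ Submodule.mem_top : (⟨x, hx⟩ : K) ∈ K'.comap K.subtype)

theorem Submodule.induction_on_length {P : Submodule R M → Prop}
    (step : ∀ K : Submodule R M, length R K ≠ ⊤ → (∀ K' < K, P K') → P K) (K : Submodule R M)
    (hK : length R K ≠ ⊤) : P K := by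
  induction K using (InvImage.wf (fun K : Submodule R M => length R K) wellFounded_lt).induction
    with
  | _ K ih =>
    exact step K hK fun K' (hK' : K' < K) =>
      have hlt := Submodule.length_lt_length_of_lt hK' hK
      ih K' hlt (hlt.trans_le le_top).ne

theorem Submodule.exists_isAtom_le {K : Submodule R M} (hK : length R K ≠ ⊤) (hK0 : K ≠ ⊥) :
    ∃ N ≤ K, IsAtom N := by
  refine Submodule.induction_on_length (P := fun K => K ≠ ⊥ → ∃ N ≤ K, IsAtom N)
    (fun K _ ih hK0 => ?_) K hK hK0
  by_cases hat : IsAtom K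
  · exact ⟨K, le_rfl, hat⟩
  obtain ⟨K', hK'K, hK'0⟩ : ∃ K' < K, K' ≠ ⊥ := by
    by_contra! h
    exact hat ⟨hK0, h⟩
  obtain ⟨N, hNK', hN⟩ := ih K' hK'K hK'0
  exact ⟨N, hNK'.trans hK'K.le, hN⟩

theorem Submodule.length_iSup_le_sum {ι : Type*} [Fintype ι] (N : ι → Submodule R M) :
    length R ↥(⨆ i, N i) ≤ ∑ i, length R (N i) := by
  classical
  let φ := DFinsupp.lsum ℕ fun i => (N i).subtype
  calc length R ↥(⨆ i, N i) = length R (LinearMap.range φ) :=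
        (LinearEquiv.ofEq _ _ (Submodule.iSup_eq_range_dfinsupp_lsum N)).length_eq
    _ ≤ length R (Π₀ i, N i) := length_le_of_surjective _ φ.surjective_rangeRestrict
    _ = ∑ i, length R (N i) := by
        rw [(DFinsupp.linearEquivFunOnFintype (R := R)).length_eq, length_pi_of_fintype]

theorem iSupIndep.length_iSup {ι : Type*} [Fintype ι] {N : ι → Submodule R M}
    (hN : iSupIndep N) : length R ↥(⨆ i, N i) = ∑ i, length R (N i) := by
  classical
  let φ := DFinsupp.lsum ℕ fun i => (N i).subtype
  calc length R ↥(⨆ i, N i) = length R (LinearMap.range φ) :=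
        (LinearEquiv.ofEq _ _ (Submodule.iSup_eq_range_dfinsupp_lsum N)).length_eq
    _ = length R (Π₀ i, N i) :=
        (LinearEquiv.ofInjective φ hN.dfinsupp_lsum_injective).length_eq.symm
    _ = ∑ i, length R (N i) := by
        rw [(DFinsupp.linearEquivFunOnFintype (R := R)).length_eq, length_pi_of_fintype]

theorem Submodule.length_eq_one_of_isAtom {N : Submodule R M} (hN : IsAtom N) :
    length R N = 1 :=
  have := isSimpleModule_iff_isAtom.mpr hN
  length_eq_one R N

end Length

section Semiprime

variable {A : Type*} [Ring A]

theorem mem_lAnn_singleton {e a : A} : a ∈ lAnn {e} ↔ a * e = 0 := by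
  simp [lAnn]

theorem IsSemiprimeRing.exists_isIdempotentElem_mem_of_isAtom (hA : IsSemiprimeRing A)
    {M : Submodule A A} (hM : IsAtom M) : ∃ e ∈ M, e ≠ 0 ∧ IsIdempotentElem e := by
  have := isSimpleModule_iff_isAtom.mpr hM
  obtain ⟨a, haM, ha0⟩ := (Submodule.ne_bot_iff M).mp hM.1
  obtain ⟨x, hx⟩ : ∃ x, a * x * a ≠ 0 := by
    by_contra! h
    exact ha0 (hA a h)
  have hbM : x * a ∈ M := M.smul_mem x haM
  -- Schur: right multiplication by `x * a ≠ 0` is bijective on `M`; the preimage of `x * a` is `e`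
  let f : M →ₗ[A] M :=
    (LinearMap.toSpanSingleton A A (x * a)).restrict fun y _ => M.smul_mem y hbM
  have hf : ∀ y : M, (f y : A) = y * (x * a) := fun _ => rfl
  have hf0 : f ≠ 0 := fun h => hx <| by simpa [hf, mul_assoc] using congr(($h ⟨a, haM⟩ : A))
  obtain ⟨⟨e, heM⟩, he⟩ := (LinearMap.bijective_of_ne_zero hf0).2 ⟨x * a, hbM⟩
  have heb : e * (x * a) = x * a := (hf _).symm.trans congr(Subtype.val $he)
  refine ⟨e, heM, fun h0 => hx ?_, ?_⟩
  · rw [mul_assoc, ← heb, h0, zero_mul, mul_zero]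
  · have : f ⟨e * e, M.smul_mem e heM⟩ = f ⟨e, heM⟩ := by
      ext
      simp only [hf, mul_assoc, heb]
    exact congr(Subtype.val $((LinearMap.bijective_of_ne_zero hf0).1 this))

theorem IsIdempotentElem.sup_inf_lAnn_eq {e : A} (he : IsIdempotentElem e) {M K : Submodule A A}
    (heM : e ∈ M) (hMK : M ≤ K) : M ⊔ K ⊓ lAnn {e} = K := by
  refine le_antisymm (sup_le hMK inf_le_left) fun v hv => Submodule.mem_sup.mpr ?_
  refine ⟨v * e, M.smul_mem v heM, v - v * e, ⟨K.sub_mem hv (hMK (M.smul_mem v heM)), ?_⟩, ?_⟩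
  · exact mem_lAnn_singleton.mpr (by rw [sub_mul, mul_assoc, he.eq, sub_self])
  · abel

theorem IsSemiprimeRing.exists_isAtom_iSup_eq (hA : IsSemiprimeRing A) {L : Submodule A A}
    (hL : length A L ≠ ⊤) :
    ∃ n : ℕ, ∃ m : Fin n → Submodule A A, (∀ i, IsAtom (m i)) ∧ L = ⨆ i, m i := by
  refine Submodule.induction_on_length
    (P := fun K => ∃ n : ℕ, ∃ m : Fin n → Submodule A A, (∀ i, IsAtom (m i)) ∧ K = ⨆ i, m i)
    (fun K hK ih => ?_) L hL
  by_cases hK0 : K = ⊥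
  · exact ⟨0, finZeroElim, finZeroElim, by simp [hK0]⟩
  obtain ⟨M, hMK, hM⟩ := Submodule.exists_isAtom_le hK hK0
  obtain ⟨e, heM, he0, he⟩ := hA.exists_isIdempotentElem_mem_of_isAtom hM
  have hlt : K ⊓ lAnn {e} < K := by
    refine inf_le_left.lt_of_ne fun h => he0 ?_
    have : e ∈ K ⊓ lAnn {e} := by rw [h]; exact hMK heM
    rw [← he.eq]
    exact mem_lAnn_singleton.mp this.2
  obtain ⟨n, m, hm, hm_sup⟩ := ih _ hlt
  refine ⟨n + 1, Fin.cons M m, Fin.cases hM hm, ?_⟩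
  rw [Fin.iSup_cons, ← hm_sup, he.sup_inf_lAnn_eq heM hMK]

end Semiprime

theorem stmt2 (A : Type*) [Ring A] (hA : IsSemiprimeRing A) (L : Submodule A A) :
    ((∃ n : ℕ, ∃ m : Fin n → Submodule A A, (∀ i, IsAtom (m i)) ∧ L = ⨆ i, m i) ↔
      mlen A L ≠ ⊤) ∧
    ((∃ n : ℕ, ∃ m : Fin n → Submodule A A, (∀ i, IsAtom (m i)) ∧ L = ⨆ i, m i) →
      ((sInf {n : ℕ | ∃ m : Fin n → Submodule A A, (∀ i, IsAtom (m i)) ∧ L = ⨆ i, m i} : ℕ) : ℕ∞)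
        = mlen A L) := by
  rw [mlen_eq_length]
  set S := {n : ℕ | ∃ m : Fin n → Submodule A A, (∀ i, IsAtom (m i)) ∧ L = ⨆ i, m i}
  have length_le : ∀ n ∈ S, length A L ≤ n := by
    rintro n ⟨m, hm, hL⟩
    rw [hL]
    simpa [Submodule.length_eq_one_of_isAtom (hm _)] using Submodule.length_iSup_le_sum m
  refine ⟨⟨fun ⟨n, hn⟩ => ne_top_of_le_ne_top (ENat.natCast_ne_top n) (length_le n hn),
    hA.exists_isAtom_iSup_eq⟩, fun hne => ?_⟩
  obtain ⟨m, hm, hL⟩ : sInf S ∈ S := Nat.sInf_mem hne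
  have hind : iSupIndep m := iSupIndep_of_isAtom_of_forall_lt hm fun k hk m' hm' h =>
    Nat.notMem_of_lt_sInf hk ⟨m', hm', hL.trans h.symm⟩
  conv_rhs => rw [hL]
  simp [hind.length_iSup, Submodule.length_eq_one_of_isAtom (hm _)]
end

section
/- Let A be a semiprime unital ring and L ⊆ A a left ideal. Then L is Fredholm (contains an element invertible modulo soc(A)) if and only if len(A/L) ≤ len(Ran(L)) < ∞, where Ran(L) = {a ∈ A : sa = 0 for all s ∈ L}. Moreover, in that case len(A/L) = len(Ran(L)). -/
open MulOpposite Submodule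

/-!
In a semiprime ring every minimal left ideal is `R g` for an idempotent `g` whose corner `g R g`
is a division ring, and then `g R` is a minimal right ideal. Hence left ideals and right ideals
of finite length are generated by idempotents of the socle. If `1 - e ∈ L` for an idempotent `e`
of the socle, every left ideal above `L` and every right ideal below `rAnn L ⊆ e R` is therefore
of the form `R u`, resp. `f R`, and `R u ↦ (1 - u) R` is an order-reversing bijection between
them, so `A ⧸ L` and `rAnn L` have the same finite length. Conversely, if `rAnn L = f R` has
finite length, then `L ⊆ R (1 - f)`, a Fredholm left ideal with the same annihilator, and
comparing lengths forces `L = R (1 - f)`.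
-/

open Order

section Height

variable {R M : Type*} [Ring R] [AddCommGroup M] [Module R M]

lemma mlen_eq_length_s4 : mlen R M = Module.length R M := by
  rw [mlen, ← Module.coe_length, WithBot.unbotD_coe]

lemma Submodule.height_sup_le (N₁ N₂ : Submodule R M) :
    height (N₁ ⊔ N₂) ≤ height N₁ + height N₂ := by
  simp only [← Module.length_submodule, ← Module.length_prod]
  refine Module.length_le_of_surjective ((N₁.subtype.coprod N₂.subtype).codRestrict _ ?_) ?_
  · rintro ⟨x, y⟩
    exact add_mem (mem_sup_left x.2) (mem_sup_right y.2)
  · rintro ⟨z, hz⟩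
    obtain ⟨x, hx, y, hy, rfl⟩ := mem_sup.mp hz
    exact ⟨(⟨x, hx⟩, ⟨y, hy⟩), rfl⟩

lemma Submodule.height_span_singleton_add_ne_top {x y : M} (hx : height (span R {x}) ≠ ⊤)
    (hy : height (span R {y}) ≠ ⊤) : height (span R {x + y}) ≠ ⊤ := by
  refine ne_top_of_le_ne_top (WithTop.add_ne_top.mpr ⟨hx, hy⟩)
    ((height_mono ?_).trans (height_sup_le _ _))
  rw [span_singleton_le_iff_mem]
  exact add_mem (mem_sup_left (mem_span_singleton_self x))
    (mem_sup_right (mem_span_singleton_self y))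

lemma Submodule.height_map_le {M' : Type*} [AddCommGroup M'] [Module R M'] (f : M →ₗ[R] M')
    (N : Submodule R M) : height (N.map f) ≤ height N := by
  simp only [← Module.length_submodule]
  exact Module.length_le_of_surjective _ (f.submoduleMap_surjective N)

lemma IsAtom.height_eq_one {N : Submodule R M} (hN : IsAtom N) : height N = 1 := by
  rw [← Module.length_submodule]
  have := isSimpleModule_iff_isAtom.mpr hN
  exact Module.length_eq_one R N

lemma IsAtom.span_singleton_eq {N : Submodule R M} (hN : IsAtom N) {x : M} (hx : x ∈ N)
    (hx0 : x ≠ 0) : span R {x} = N :=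
  (hN.le_iff.mp ((span_singleton_le_iff_mem x N).mpr hx)).resolve_left (by simpa using hx0)

end Height

lemma exists_isAtom_le_of_height_ne_top {α : Type*} [PartialOrder α] [OrderBot α] {x : α}
    (hx : x ≠ ⊥) (hfin : height x ≠ ⊤) : ∃ a, IsAtom a ∧ a ≤ x := by
  obtain ⟨a, ⟨ha0, hax⟩, hmin⟩ := WellFounded.has_min (InvImage.wf height wellFounded_lt)
    {y | y ≠ ⊥ ∧ y ≤ x} ⟨x, hx, le_rfl⟩
  refine ⟨a, ⟨ha0, fun b hba => ?_⟩, hax⟩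
  by_contra hb
  exact hmin b ⟨hb, hba.le.trans hax⟩
    (height_strictMono hba ((height_mono (hba.le.trans hax)).trans_lt hfin.lt_top))

section Ring

variable {R : Type*} [Ring R]

lemma IsSemiprimeRing.op (hR : IsSemiprimeRing R) : IsSemiprimeRing Rᵐᵒᵖ :=
  fun a ha => unop_injective <| hR a.unop fun x => by
    simpa [mul_assoc] using congrArg unop (ha (MulOpposite.op x))

lemma mem_span_singleton_iff_mul_eq {e x : R} (he : IsIdempotentElem e) :
    x ∈ span R {e} ↔ x * e = x := by
  rw [mem_span_singleton]
  refine ⟨?_, fun h => ⟨x, h⟩⟩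
  rintro ⟨a, rfl⟩
  rw [smul_eq_mul, mul_assoc, he.eq]

lemma mem_span_op_singleton_iff_mul_eq {e x : R} (he : IsIdempotentElem e) :
    x ∈ span Rᵐᵒᵖ {e} ↔ e * x = x := by
  rw [mem_span_singleton]
  refine ⟨?_, fun h => ⟨op x, h⟩⟩
  rintro ⟨a, rfl⟩
  rw [smul_eq_mul_unop, ← mul_assoc, he.eq]

@[elab_as_elim]
lemma socle_induction {motive : R → Prop} {x : R} (hx : x ∈ socle R)
    (atom : ∀ S : Submodule R R, IsAtom S → ∀ x ∈ S, motive x) (zero : motive 0)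
    (add : ∀ x y, motive x → motive y → motive (x + y)) : motive x := by
  rw [socle, sSup_eq_iSup'] at hx
  exact iSup_induction _ (motive := motive) hx (fun S => atom S.1 S.2) zero add

lemma IsIdempotentElem.add_sub_mul_of_mul_eq_zero {g h : R} (hg : IsIdempotentElem g)
    (hh : IsIdempotentElem h) (hhg : h * g = 0) : IsIdempotentElem (g + h - g * h) := by
  set e := g + h - g * h
  have heg : e * g = g := by
    simp only [e, sub_mul, add_mul, hg.eq, hhg, mul_assoc, mul_zero, add_zero, sub_zero]
  have heh : e * h = h := by
    simp only [e, sub_mul, add_mul, hh.eq, mul_assoc, add_sub_cancel_left]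
  show e * e = e
  calc e * e = e * g + e * h - e * g * h := by simp only [e]; noncomm_ring
    _ = e := by rw [heg, heh]

lemma span_singleton_sup_span_singleton_eq {g h : R} (hg : IsIdempotentElem g)
    (hh : IsIdempotentElem h) (hhg : h * g = 0) :
    span R {g} ⊔ span R {h} = span R {g + h - g * h} := by
  have he := hg.add_sub_mul_of_mul_eq_zero hh hhg
  apply le_antisymm
  · refine sup_le ?_ ?_ <;> rw [span_singleton_le_iff_mem, mem_span_singleton_iff_mul_eq he]
    · simp only [mul_sub, mul_add, hg.eq, ← mul_assoc, add_sub_cancel_right]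
    · simp only [mul_sub, mul_add, hh.eq, hhg, ← mul_assoc, zero_mul, sub_zero, zero_add]
  · rw [span_singleton_le_iff_mem]
    exact sub_mem (add_mem (mem_sup_left (mem_span_singleton_self g))
      (mem_sup_right (mem_span_singleton_self h)))
      (mem_sup_right (smul_mem _ g (mem_span_singleton_self h)))

lemma exists_idempotent_of_isAtom (hR : IsSemiprimeRing R) {S : Submodule R R} (hS : IsAtom S) :
    ∃ g, IsIdempotentElem g ∧ S = span R {g} := by
  obtain ⟨u, hu, s, hs, hsu⟩ : ∃ u ∈ S, ∃ s ∈ S, s * u ≠ 0 := by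
    by_contra! h
    refine hS.1 (eq_bot_iff.mpr fun x hx => (mem_bot R).mpr (hR x fun a => ?_))
    simpa [mul_assoc] using h (a * x) (S.smul_mem a hx) x hx
  have hu0 : u ≠ 0 := by rintro rfl; exact hsu (mul_zero s)
  -- right multiplication by `u` maps the minimal left ideal `S` onto itself
  let f := LinearMap.toSpanSingleton R R u
  have hf : ∀ x, f x = x * u := fun _ => rfl
  have hSf : S.map f = S := by
    refine (hS.le_iff.mp (map_le_iff_le_comap.mpr fun x hx => ?_)).resolve_left ?_
    · exact S.smul_mem x hu
    · exact (Submodule.ne_bot_iff _).mpr ⟨s * u, ⟨s, hs, rfl⟩, hsu⟩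
  obtain ⟨g, hg, hgu : g * u = u⟩ := hSf.ge hu
  have hker : S ⊓ LinearMap.ker f = ⊥ :=
    (hS.le_iff.mp inf_le_left).resolve_right fun h => hu0 <| by
      rw [← hgu]; exact (h.ge hg).2
  have hgg : g * g - g ∈ S ⊓ LinearMap.ker f :=
    ⟨sub_mem (S.smul_mem g hg) hg, by simp [hf, sub_mul, mul_assoc, hgu]⟩
  rw [hker, mem_bot, sub_eq_zero] at hgg
  have hg0 : g ≠ 0 := by rintro rfl; exact hu0 (by rw [← hgu, zero_mul])
  exact ⟨g, hgg, (hS.span_singleton_eq hg hg0).symm⟩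

/-- The corner ring `g R g` is a division ring with unit `g`. -/
def IsDivisionCorner (g : R) : Prop :=
  ∀ a, g * a * g ≠ 0 → ∃ b, b * (g * a * g) = g ∧ g * a * g * b = g

lemma isDivisionCorner_op_iff {g : R} : IsDivisionCorner (op g) ↔ IsDivisionCorner g := by
  refine ⟨fun h a ha => ?_, fun h a ha => ?_⟩
  · obtain ⟨b, hb₁, hb₂⟩ := h (op a) fun hz => ha (op_injective (by simpa [mul_assoc] using hz))
    exact ⟨b.unop, by simpa [mul_assoc] using congrArg unop hb₂,
      by simpa [mul_assoc] using congrArg unop hb₁⟩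
  · obtain ⟨b, hb₁, hb₂⟩ := h a.unop fun hz => ha (unop_injective (by simpa [mul_assoc] using hz))
    exact ⟨op b, by simpa [mul_assoc] using congrArg op hb₂,
      by simpa [mul_assoc] using congrArg op hb₁⟩

lemma isAtom_span_singleton_iff (hR : IsSemiprimeRing R) {g : R} (hg : IsIdempotentElem g)
    (hg0 : g ≠ 0) : IsAtom (span R {g}) ↔ IsDivisionCorner g := by
  refine ⟨fun hS => ?_, fun hC => ⟨by simpa using hg0, fun Y hY => ?_⟩⟩
  · have hinv : ∀ t, t * g = t → t ≠ 0 → ∃ c, c * t = g := fun t htg ht0 => by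
      have hgt : g ∈ span R {t} := by
        rw [hS.span_singleton_eq ((mem_span_singleton_iff_mul_eq hg).mpr htg) ht0]
        exact mem_span_singleton_self g
      exact mem_span_singleton.mp hgt
    intro a ht
    set t := g * a * g
    have hgt : g * t = t := by simp only [t, ← mul_assoc, hg.eq]
    obtain ⟨c, hc⟩ := hinv t (by simp only [t, mul_assoc, hg.eq]) ht
    -- `c' := g c g` is again a left inverse of `t`, and a left inverse of `c'` must be `t`
    set c' := g * c * g
    have hc't : c' * t = g := by
      calc c' * t = g * (c * (g * t)) := by simp only [c', mul_assoc]
        _ = g := by rw [hgt, hc, hg.eq]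
    obtain ⟨d, hd⟩ := hinv c' (by simp only [c', mul_assoc, hg.eq])
      (by rintro h; rw [h, zero_mul] at hc't; exact hg0 hc't.symm)
    have htd : t = d * g := by
      calc t = g * t := hgt.symm
        _ = d * (c' * t) := by rw [← hd, mul_assoc]
        _ = d * g := by rw [hc't]
    have hgc' : g * c' = c' := by simp only [c', ← mul_assoc, hg.eq]
    refine ⟨c', hc't, ?_⟩
    rw [htd, mul_assoc, hgc', hd]
  · by_contra hY0
    obtain ⟨y, hyY, hy0⟩ := (Submodule.ne_bot_iff Y).mp hY0
    have hyg : y * g = y := (mem_span_singleton_iff_mul_eq hg).mp (hY.le hyY)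
    obtain ⟨u, hu⟩ : ∃ u, y * u * y ≠ 0 := by
      by_contra! h
      exact hy0 (hR y h)
    obtain ⟨b, hb, -⟩ := hC (u * y) fun h => hu <| by
      calc y * u * y = y * g * u * (y * g) := by rw [hyg]
        _ = y * (g * (u * y) * g) := by simp only [mul_assoc]
        _ = 0 := by rw [h, mul_zero]
    have hgY : g ∈ Y := by
      have : b * g * u * y = g := by
        calc b * g * u * y = b * (g * (u * y) * g) := by simp only [mul_assoc, hyg]
          _ = g := hb
      rw [← this]; exact Y.smul_mem _ hyY
    exact hY.not_ge ((span_singleton_le_iff_mem g Y).mpr hgY)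

variable (R) in
def rightIdealOrderIso : Submodule Rᵐᵒᵖ R ≃o Submodule Rᵐᵒᵖ Rᵐᵒᵖ :=
  Submodule.orderIsoMapComap
    ({ toFun := op, invFun := unop, map_add' _ _ := rfl, map_smul' _ _ := rfl,
       left_inv _ := rfl, right_inv _ := rfl } : R ≃ₗ[Rᵐᵒᵖ] Rᵐᵒᵖ)

lemma rightIdealOrderIso_span_singleton (x : R) :
    rightIdealOrderIso R (span Rᵐᵒᵖ {x}) = span Rᵐᵒᵖ {op x} := by
  simp [rightIdealOrderIso, Submodule.map_span]

lemma isAtom_span_op_singleton_iff (hR : IsSemiprimeRing R) {g : R} (hg : IsIdempotentElem g)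
    (hg0 : g ≠ 0) : IsAtom (span Rᵐᵒᵖ {g}) ↔ IsDivisionCorner g := by
  rw [← (rightIdealOrderIso R).isAtom_iff, rightIdealOrderIso_span_singleton,
    isAtom_span_singleton_iff hR.op (congrArg op hg) (op_ne_zero_iff g |>.mpr hg0),
    isDivisionCorner_op_iff]

lemma isAtom_span_op_singleton_iff_isAtom_span_singleton (hR : IsSemiprimeRing R) {g : R}
    (hg : IsIdempotentElem g) :
    IsAtom (span Rᵐᵒᵖ {g}) ↔ IsAtom (span R {g}) := by
  rcases eq_or_ne g 0 with rfl | hg0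
  · exact iff_of_false (fun h => h.1 (by simp)) (fun h => h.1 (by simp))
  rw [isAtom_span_op_singleton_iff hR hg hg0, isAtom_span_singleton_iff hR hg hg0]

variable (R) in
def minimalIdempotents : Set R := {g | IsIdempotentElem g ∧ IsAtom (span R {g})}

theorem exists_idempotent_of_height_ne_top (hR : IsSemiprimeRing R) {K : Submodule R R}
    (hK : height K ≠ ⊤) : ∃ e, IsIdempotentElem e ∧
      e ∈ NonUnitalSubring.closure (minimalIdempotents R) ∧ K = span R {e} := by
  generalize hn : height K = n
  induction n using WellFoundedLT.induction generalizing K with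
  | _ n ih =>
  rcases eq_or_ne K ⊥ with rfl | hK0
  · exact ⟨0, .zero, zero_mem _, by simp⟩
  obtain ⟨S, hS, hSK⟩ := exists_isAtom_le_of_height_ne_top hK0 hK
  obtain ⟨g, hg, rfl⟩ := exists_idempotent_of_isAtom hR hS
  have hgK : g ∈ K := hSK (mem_span_singleton_self g)
  -- split `K = R g ⊕ (K ∩ lAnn g)` and apply the induction hypothesis to the second summand
  set K' := K ⊓ lAnn {g}
  have hK'K : K' < K := inf_lt_left.mpr fun h => hS.1 <| by
    simpa [hg.eq] using (h hgK) g rfl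
  have hK' : height K' < height K :=
    Order.height_strictMono hK'K ((height_mono hK'K.le).trans_lt hK.lt_top)
  obtain ⟨h, hh, hhC, hK'h⟩ := ih _ (hn ▸ hK') hK'.ne_top rfl
  have hhg : h * g = 0 := (mem_inf.mp (hK'h.ge (mem_span_singleton_self h))).2 g rfl
  refine ⟨g + h - g * h, hg.add_sub_mul_of_mul_eq_zero hh hhg,
    sub_mem (add_mem (NonUnitalSubring.subset_closure ⟨hg, hS⟩) hhC)
      (mul_mem (NonUnitalSubring.subset_closure ⟨hg, hS⟩) hhC), ?_⟩
  rw [← span_singleton_sup_span_singleton_eq hg hh hhg, ← hK'h]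
  refine le_antisymm (fun x hx =>
    mem_sup.mpr ⟨x * g, ?_, x - x * g, mem_inf.mpr ⟨?_, ?_⟩, by abel⟩) (sup_le hSK inf_le_left)
  · exact smul_mem _ x (mem_span_singleton_self g)
  · exact sub_mem hx (K.smul_mem x hgK)
  · rintro _ rfl
    rw [sub_mul, mul_assoc, hg.eq, sub_self]

lemma mem_socle_unop_of_mem_closure (hR : IsSemiprimeRing R) {x : Rᵐᵒᵖ}
    (hx : x ∈ NonUnitalSubring.closure (minimalIdempotents Rᵐᵒᵖ)) : x.unop ∈ socle R := by
  induction hx using NonUnitalSubring.closure_induction with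
  | mem g hg =>
    have hg' : IsIdempotentElem g.unop := congrArg unop hg.1
    have hatom : IsAtom (span R {g.unop}) := by
      rw [← isAtom_span_op_singleton_iff_isAtom_span_singleton hR hg',
        ← (rightIdealOrderIso R).isAtom_iff, rightIdealOrderIso_span_singleton, op_unop]
      exact hg.2
    exact le_sSup (α := Submodule R R) hatom (mem_span_singleton_self _)
  | zero => exact zero_mem _
  | add x y _ _ hx hy => exact add_mem hx hy
  | neg x _ hx => exact neg_mem hx
  | mul x y _ _ hx _ => exact (socle R).smul_mem y.unop hx

theorem exists_idempotent_of_height_ne_top_op (hR : IsSemiprimeRing R) {X : Submodule Rᵐᵒᵖ R}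
    (hX : height X ≠ ⊤) : ∃ f, IsIdempotentElem f ∧ f ∈ socle R ∧ X = span Rᵐᵒᵖ {f} := by
  obtain ⟨e, he, heC, hXe⟩ := exists_idempotent_of_height_ne_top hR.op
    (K := rightIdealOrderIso R X) (by rwa [height_orderIso])
  refine ⟨e.unop, congrArg unop he, mem_socle_unop_of_mem_closure hR heC,
    (rightIdealOrderIso R).injective ?_⟩
  rw [hXe, rightIdealOrderIso_span_singleton, op_unop]

lemma height_span_singleton_ne_top_of_mem_socle {x : R} (hx : x ∈ socle R) :
    height (span R {x}) ≠ ⊤ := by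
  refine socle_induction hx (fun S hS x hx => ?_) (by simp) fun x y =>
    height_span_singleton_add_ne_top
  refine ne_top_of_le_ne_top ?_ (height_mono ((span_singleton_le_iff_mem x S).mpr hx))
  simp [hS.height_eq_one]

lemma height_span_op_singleton_ne_top_of_mem_socle (hR : IsSemiprimeRing R) {x : R}
    (hx : x ∈ socle R) : height (span Rᵐᵒᵖ {x}) ≠ ⊤ := by
  refine socle_induction hx (fun S hS x hx => ?_) (by simp) fun x y =>
    height_span_singleton_add_ne_top
  obtain ⟨g, hg, rfl⟩ := exists_idempotent_of_isAtom hR hS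
  obtain ⟨a, rfl⟩ := mem_span_singleton.mp hx
  have hgR : IsAtom (span Rᵐᵒᵖ {g}) :=
    (isAtom_span_op_singleton_iff_isAtom_span_singleton hR hg).mpr hS
  have hmap : span Rᵐᵒᵖ {a • g} = (span Rᵐᵒᵖ {g}).map (DistribSMul.toLinearMap Rᵐᵒᵖ R a) := by
    rw [map_span, Set.image_singleton]; rfl
  rw [hmap]
  refine ne_top_of_le_ne_top ?_ (height_map_le _ _)
  simp [hgR.height_eq_one]

lemma mem_rAnn {S : Set R} {x : R} : x ∈ rAnn S ↔ ∀ s ∈ S, s * x = 0 := Iff.rfl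

lemma mem_lAnn {S : Set R} {x : R} : x ∈ lAnn S ↔ ∀ s ∈ S, x * s = 0 := Iff.rfl

lemma rAnn_anti {S T : Set R} (h : S ⊆ T) : rAnn T ≤ rAnn S := fun _ hx s hs => hx s (h hs)

lemma lAnn_anti {S T : Set R} (h : S ⊆ T) : lAnn T ≤ lAnn S := fun _ hx s hs => hx s (h hs)

lemma rAnn_span_singleton {u : R} (hu : IsIdempotentElem u) :
    rAnn (span R {u} : Set R) = span Rᵐᵒᵖ {1 - u} := by
  ext x
  rw [mem_rAnn, mem_span_op_singleton_iff_mul_eq hu.one_sub, sub_mul, one_mul, sub_eq_self]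
  refine ⟨fun h => h u (mem_span_singleton_self u), fun h s hs => ?_⟩
  obtain ⟨a, rfl⟩ := mem_span_singleton.mp hs
  rw [smul_eq_mul, mul_assoc, h, mul_zero]

lemma lAnn_span_op_singleton {u : R} (hu : IsIdempotentElem u) :
    lAnn (span Rᵐᵒᵖ {u} : Set R) = span R {1 - u} := by
  ext x
  rw [mem_lAnn, mem_span_singleton_iff_mul_eq hu.one_sub, mul_sub, mul_one, sub_eq_self]
  refine ⟨fun h => h u (mem_span_singleton_self u), fun h s hs => ?_⟩
  obtain ⟨a, rfl⟩ := mem_span_singleton.mp hs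
  rw [smul_eq_mul_unop, ← mul_assoc, h, zero_mul]

def annihilatorOrderIso (L : Submodule R R)
    (hK : ∀ K : Submodule R R, L ≤ K → lAnn (rAnn (K : Set R) : Set R) = K)
    (hX : ∀ X : Submodule Rᵐᵒᵖ R, X ≤ rAnn (L : Set R) → rAnn (lAnn (X : Set R) : Set R) = X) :
    Set.Ici L ≃o (Set.Iic (rAnn (L : Set R)))ᵒᵈ where
  toFun K := OrderDual.toDual ⟨rAnn K.1, rAnn_anti K.2⟩
  invFun X := ⟨lAnn (OrderDual.ofDual X).1, fun x hx y hy => (OrderDual.ofDual X).2 hy x hx⟩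
  left_inv K := Subtype.ext (hK K.1 K.2)
  right_inv X := congrArg OrderDual.toDual (Subtype.ext (hX _ (OrderDual.ofDual X).2))
  map_rel_iff' {K₁ K₂} := by
    refine ⟨fun h => ?_, fun h => rAnn_anti h⟩
    change K₁.1 ≤ K₂.1
    rw [← hK K₁.1 K₁.2, ← hK K₂.1 K₂.2]
    exact lAnn_anti h

lemma exists_idempotent_one_sub_mem_of_mem_socle (hR : IsSemiprimeRing R) {s : R}
    (hs : s ∈ socle R) {L : Submodule R R} (hL : 1 - s ∈ L) :
    ∃ e, IsIdempotentElem e ∧ e ∈ socle R ∧ 1 - e ∈ L := by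
  obtain ⟨e₀, he₀, -, hse₀⟩ :=
    exists_idempotent_of_height_ne_top hR (height_span_singleton_ne_top_of_mem_socle hs)
  have hs_e₀ : s * e₀ = s :=
    (mem_span_singleton_iff_mul_eq he₀).mp (hse₀ ▸ mem_span_singleton_self s)
  have he₀_soc : e₀ ∈ socle R :=
    (hse₀ ▸ (span_singleton_le_iff_mem s _).mpr hs) (mem_span_singleton_self e₀)
  -- `e := 1 - (1 - e₀)(1 - s)` is idempotent because `e e₀ = e`
  set e := e₀ + s - e₀ * s
  have hee₀ : e * e₀ = e := by
    simp only [e, sub_mul, add_mul, he₀.eq, hs_e₀, mul_assoc]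
  refine ⟨e, ?_, sub_mem (add_mem he₀_soc hs) ((socle R).smul_mem e₀ hs), ?_⟩
  · calc e * e = e * e₀ + e * s - e * e₀ * s := by simp only [e]; noncomm_ring
      _ = e := by rw [hee₀]; abel
  · have : 1 - e = (1 - e₀) * (1 - s) := by simp only [e]; noncomm_ring
    rw [this]
    exact L.smul_mem _ hL

lemma isFredholmLeftIdeal_iff_exists_idempotent (hR : IsSemiprimeRing R) (L : Submodule R R) :
    IsFredholmLeftIdeal L ↔ ∃ e, IsIdempotentElem e ∧ e ∈ socle R ∧ 1 - e ∈ L := by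
  refine ⟨fun ⟨a, haL, b, _, hba⟩ => ?_, fun ⟨e, _, he, hL⟩ => ⟨1 - e, hL, 1, ?_, ?_⟩⟩
  · refine exists_idempotent_one_sub_mem_of_mem_socle hR (s := 1 - b * a) ?_ ?_
    · simpa using neg_mem hba
    · simpa using L.smul_mem b haL
  · simpa using neg_mem he
  · simpa using neg_mem he

lemma exists_idempotent_of_one_sub_mem (hR : IsSemiprimeRing R) {e : R} (he : IsIdempotentElem e)
    (he_soc : e ∈ socle R) {K : Submodule R R} (hK : 1 - e ∈ K) :
    ∃ u, IsIdempotentElem u ∧ K = span R {u} := by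
  obtain ⟨k, hk, -, hKk⟩ := exists_idempotent_of_height_ne_top hR
    (ne_top_of_le_ne_top (height_span_singleton_ne_top_of_mem_socle he_soc)
      (height_mono (inf_le_right : K ⊓ span R {e} ≤ _)))
  have hke : k * e = k :=
    (mem_span_singleton_iff_mul_eq he).mp (mem_inf.mp (hKk.ge (mem_span_singleton_self k))).2
  have hk1e : k * (1 - e) = 0 := by rw [mul_sub, mul_one, hke, sub_self]
  refine ⟨_, he.one_sub.add_sub_mul_of_mul_eq_zero hk hk1e, ?_⟩
  rw [← span_singleton_sup_span_singleton_eq he.one_sub hk hk1e, ← hKk]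
  have htop : span R {1 - e} ⊔ span R {e} = ⊤ := eq_top_iff.mpr fun x _ =>
    mem_sup.mpr ⟨x * (1 - e), smul_mem _ x (mem_span_singleton_self _), x * e,
      smul_mem _ x (mem_span_singleton_self _), by rw [← mul_add, sub_add_cancel, mul_one]⟩
  calc K = (span R {1 - e} ⊔ span R {e}) ⊓ K := by rw [htop, top_inf_eq]
    _ = span R {1 - e} ⊔ K ⊓ span R {e} := by
      rw [sup_inf_assoc_of_le _ ((span_singleton_le_iff_mem _ _).mpr hK), inf_comm]

variable {e : R} {L : Submodule R R}

lemma height_rAnn_ne_top (hR : IsSemiprimeRing R) (he : IsIdempotentElem e) (he_soc : e ∈ socle R)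
    (hL : 1 - e ∈ L) : height (rAnn (L : Set R)) ≠ ⊤ := by
  refine ne_top_of_le_ne_top (height_span_op_singleton_ne_top_of_mem_socle hR he_soc)
    (height_mono ?_)
  have := rAnn_anti ((span_singleton_le_iff_mem _ L).mpr hL)
  rwa [rAnn_span_singleton he.one_sub, sub_sub_cancel] at this

theorem coheight_eq_height_rAnn (hR : IsSemiprimeRing R) (he : IsIdempotentElem e)
    (he_soc : e ∈ socle R) (hL : 1 - e ∈ L) : coheight L = height (rAnn (L : Set R)) := by
  have hK : ∀ K : Submodule R R, L ≤ K → lAnn (rAnn (K : Set R) : Set R) = K := fun K hLK => by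
    obtain ⟨u, hu, rfl⟩ := exists_idempotent_of_one_sub_mem hR he he_soc (hLK hL)
    rw [rAnn_span_singleton hu, lAnn_span_op_singleton hu.one_sub, sub_sub_cancel]
  have hX : ∀ X : Submodule Rᵐᵒᵖ R, X ≤ rAnn (L : Set R) → rAnn (lAnn (X : Set R) : Set R) = X :=
    fun X hXL => by
      obtain ⟨f, hf, -, rfl⟩ := exists_idempotent_of_height_ne_top_op hR
        (ne_top_of_le_ne_top (height_rAnn_ne_top hR he he_soc hL) (height_mono hXL))
      rw [lAnn_span_op_singleton hf, rAnn_span_singleton hf.one_sub, sub_sub_cancel]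
  have := krullDim_eq_of_orderIso (annihilatorOrderIso L hK hX)
  rw [krullDim_orderDual, ← coheight_eq_krullDim_Ici, ← height_eq_krullDim_Iic] at this
  exact_mod_cast this

theorem exists_idempotent_one_sub_mem_of_coheight_le (hR : IsSemiprimeRing R)
    (hle : coheight L ≤ height (rAnn (L : Set R))) (hfin : height (rAnn (L : Set R)) ≠ ⊤) :
    ∃ f, IsIdempotentElem f ∧ f ∈ socle R ∧ 1 - f ∈ L := by
  obtain ⟨f, hf, hf_soc, hLf⟩ := exists_idempotent_of_height_ne_top_op hR hfin
  refine ⟨f, hf, hf_soc, ?_⟩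
  -- `L ⊆ R (1 - f)` with the same annihilator `f R`, so the hypothesis forces equal colengths
  set L' := span R {1 - f}
  have hLL' : L ≤ L' := fun x hx => by
    rw [mem_span_singleton_iff_mul_eq hf.one_sub, mul_sub, mul_one, sub_eq_self]
    exact hLf.ge (mem_span_singleton_self f) x hx
  have hL' : coheight L' = height (rAnn (L : Set R)) := by
    rw [coheight_eq_height_rAnn hR hf hf_soc (mem_span_singleton_self (1 - f)),
      rAnn_span_singleton hf.one_sub, sub_sub_cancel, hLf]
  obtain rfl : L = L' := by
    by_contra hne
    have := coheight_strictAnti (lt_of_le_of_ne hLL' hne) (hL' ▸ hfin.lt_top)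
    exact lt_irrefl _ (this.trans_le (hle.trans_eq hL'.symm))
  exact mem_span_singleton_self _

end Ring

theorem stmt4 (A : Type*) [Ring A] (hA : IsSemiprimeRing A) (L : Submodule A A) :
    (IsFredholmLeftIdeal L ↔
      mlen A (A ⧸ L) ≤ mlen Aᵐᵒᵖ (rAnn (L : Set A)) ∧ mlen Aᵐᵒᵖ (rAnn (L : Set A)) ≠ ⊤) ∧
    (IsFredholmLeftIdeal L → mlen A (A ⧸ L) = mlen Aᵐᵒᵖ (rAnn (L : Set A))) := by
  rw [mlen_eq_length_s4, mlen_eq_length_s4, Module.length_quotient, Module.length_submodule,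
    isFredholmLeftIdeal_iff_exists_idempotent hA]
  refine ⟨⟨fun ⟨e, he, he_soc, hL⟩ => ?_, fun ⟨hle, hfin⟩ => ?_⟩, fun ⟨e, he, he_soc, hL⟩ => ?_⟩
  · exact ⟨(coheight_eq_height_rAnn hA he he_soc hL).le, height_rAnn_ne_top hA he he_soc hL⟩
  · exact exists_idempotent_one_sub_mem_of_coheight_le hA hle hfin
  · exact coheight_eq_height_rAnn hA he he_soc hL
end

section
/- Let A be a semiprime unital ring and L ⊆ A a left ideal. Then L is Fredholm if and only if there exist n ∈ ℕ and idempotents p₁, …, pₙ ∈ A such that each left ideal A pⱼ is a maximal left ideal and L = ⋂ⱼ A pⱼ. -/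
open MulOpposite Submodule

/-!
A left ideal `L` is Fredholm exactly when `L ⊔ soc(A) = A`: if `ba - 1 ∈ soc(A)` with `a ∈ L`,
then `1 = ba - (ba - 1)`, and conversely `1 = l + s` makes `l = 1 - s` Fredholm.

If `L ⊔ soc(A) = A`, finitely many minimal left ideals `I` already suffice; choosing a maximal
`M ⊇ L` and an `I` not below `M`, we get `A = M ⊕ I`, so `M = Aq` for an idempotent `q`, and by
modularity `L = M ∩ (L + I)`, where `L + I` needs one minimal left ideal fewer.

Conversely, if the `Ap_j` are maximal, the `A(1 - p_j)` are minimal, hence in the socle, and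
their generators are von Neumann regular. This produces `g ∈ soc(A)` with `g(1 - p_j) = 1 - p_j`
for all `j`, so that `1 - g ∈ ⋂ Ap_j` and `1 = (1 - g) + g`.
-/

section Socle

variable {A : Type*} [Ring A]

theorem socle_isFullyInvariant : (socle A).IsFullyInvariant := fun f =>
  sSup_le fun I hI => by
    have := isSimpleModule_iff_isAtom.mpr hI
    refine Submodule.map_le_iff_le_comap.mp ((I.map_le_isotypicComponent f).trans ?_)
    exact sSup_le fun m ⟨e⟩ => le_sSup (isSimpleModule_iff_isAtom.mp (IsSimpleModule.congr e))

theorem le_socle_of_isAtom {I : Submodule A A} (hI : IsAtom I) : I ≤ socle A := le_sSup hI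

instance socle_isTwoSided : Ideal.IsTwoSided (socle A) :=
  isFullyInvariant_iff_isTwoSided.mp socle_isFullyInvariant

theorem isFredholmLeftIdeal_iff_sup_socle_eq_top {L : Submodule A A} :
    IsFredholmLeftIdeal L ↔ L ⊔ socle A = ⊤ := by
  rw [Ideal.eq_top_iff_one]
  constructor
  · rintro ⟨a, haL, b, -, hba⟩
    rw [show (1 : A) = b * a - (b * a - 1) by abel]
    exact sub_mem (mem_sup_left (L.smul_mem b haL)) (mem_sup_right hba)
  · intro h
    obtain ⟨l, hl, s, hs, hls⟩ := mem_sup.mp h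
    have hl' : l = 1 - s := eq_sub_of_add_eq hls
    refine ⟨l, hl, 1, ?_, ?_⟩ <;> simpa [hl'] using neg_mem hs

end Socle

section Idempotent

variable {A : Type*} [Ring A] {e : A}

theorem IsIdempotentElem.mem_span_singleton_iff (he : IsIdempotentElem e) {x : A} :
    x ∈ span A {e} ↔ x * e = x := by
  refine ⟨?_, fun h => mem_span_singleton.mpr ⟨x, h⟩⟩
  intro hx
  obtain ⟨y, rfl⟩ := mem_span_singleton.mp hx
  rw [smul_eq_mul, mul_assoc, he.eq]

theorem IsIdempotentElem.isCompl_span_singleton_one_sub (he : IsIdempotentElem e) :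
    IsCompl (span A {e}) (span A {1 - e}) := by
  have he' := he.one_sub
  refine ⟨disjoint_def.mpr fun x hx hx' => ?_, codisjoint_iff.mpr ?_⟩
  · rw [he.mem_span_singleton_iff] at hx
    rw [he'.mem_span_singleton_iff, mul_sub, mul_one, hx, sub_self] at hx'
    exact hx'.symm
  · exact (Ideal.eq_top_iff_one _).mpr <| mem_sup.mpr
      ⟨e, mem_span_singleton_self e, 1 - e, mem_span_singleton_self _, add_sub_cancel e 1⟩

theorem exists_isIdempotentElem_span_eq_of_isCompl {M I : Submodule A A} (h : IsCompl M I) :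
    ∃ q, IsIdempotentElem q ∧ span A {q} = M := by
  -- `q` is the `M`-component of `1`.
  obtain ⟨q, hq, t, ht, hqt⟩ := mem_sup.mp ((Ideal.eq_top_iff_one _).mp h.sup_eq_top)
  have hright_unit : ∀ x ∈ M, x * q = x := by
    intro x hx
    have hx_split : x * q + x * t = x := by rw [← mul_add, hqt, mul_one]
    have hxt : x * t ∈ M ⊓ I := by
      refine ⟨?_, I.smul_mem x ht⟩
      rw [eq_sub_of_add_eq' hx_split]
      exact sub_mem hx (M.smul_mem x hq)
    rw [h.inf_eq_bot, mem_bot] at hxt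
    rwa [hxt, add_zero] at hx_split
  refine ⟨q, hright_unit q hq, le_antisymm ?_ fun x hx => ?_⟩
  · exact (span_singleton_le_iff_mem q M).mpr hq
  · exact mem_span_singleton.mpr ⟨x, hright_unit x hx⟩

theorem IsIdempotentElem.exists_mul_mul_eq_self (he : IsIdempotentElem e)
    (hatom : IsAtom (span A {e})) {f : A} (hf : f ∈ span A {e}) : ∃ c, f * c * f = f := by
  rcases eq_or_ne f 0 with rfl | hf0
  · exact ⟨0, by simp⟩
  have hspan : span A {f} = span A {e} :=
    (hatom.le_iff_eq ((span_singleton_eq_bot.not).mpr hf0)).mp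
      ((span_singleton_le_iff_mem f _).mpr hf)
  -- `e = cf`, hence `f = fe = fcf`.
  obtain ⟨c, hc⟩ := mem_span_singleton.mp (hspan ▸ mem_span_singleton_self e)
  refine ⟨c, ?_⟩
  rw [mul_assoc, ← smul_eq_mul c f, hc]
  exact he.mem_span_singleton_iff.mp hf

end Idempotent

section LeftUnit

variable {A : Type*} [Ring A]

theorem exists_left_unit_extend {g e : A} (hg : g ∈ socle A) (he : IsIdempotentElem e)
    (hatom : IsAtom (span A {e})) :
    ∃ g' ∈ socle A, g' * e = e ∧ ∀ x, g * x = x → g' * x = x := by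
  set f := e - g * e
  have hf : f ∈ span A {e} :=
    sub_mem (mem_span_singleton_self e) (smul_mem _ g (mem_span_singleton_self e))
  obtain ⟨c, hc⟩ := he.exists_mul_mul_eq_self hatom hf
  have hh : f * c ∈ socle A := Ideal.mul_mem_right c _ (le_socle_of_isAtom hatom hf)
  -- `g + h - hg` fixes what `g` fixes, and also `e` since `h = fc` fixes `f = e - ge`.
  refine ⟨g + f * c - f * c * g, sub_mem (add_mem hg hh) (smul_mem _ _ hg), ?_, fun x hx => ?_⟩
  · calc (g + f * c - f * c * g) * e = g * e + f * c * f := by simp only [f]; noncomm_ring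
      _ = e := by rw [hc, add_sub_cancel]
  · rw [sub_mul, add_mul, mul_assoc (f * c) g x, hx, add_sub_cancel_right]

theorem exists_left_unit_mem_socle (s : Finset A)
    (hs : ∀ e ∈ s, IsIdempotentElem e ∧ IsAtom (span A {e})) :
    ∃ g ∈ socle A, ∀ e ∈ s, g * e = e := by
  classical
  induction s using Finset.induction_on with
  | empty => exact ⟨0, zero_mem _, by simp⟩
  | insert e s _ ih =>
    rw [Finset.forall_mem_insert] at hs
    obtain ⟨g, hg, hgs⟩ := ih hs.2
    obtain ⟨g', hg', hg'e, hg'g⟩ := exists_left_unit_extend hg hs.1.1 hs.1.2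
    exact ⟨g', hg', Finset.forall_mem_insert _ _ _ |>.mpr ⟨hg'e, fun x hx => hg'g x (hgs x hx)⟩⟩

end LeftUnit

section Decomposition

variable {A : Type*} [Ring A]

def IsInfOfIdempotentCoatoms (L : Submodule A A) : Prop :=
  ∃ n : ℕ, ∃ p : Fin n → A, (∀ j, IsIdempotentElem (p j)) ∧
    (∀ j, IsCoatom (span A {p j})) ∧ L = ⨅ j, span A {p j}

theorem isInfOfIdempotentCoatoms_top : IsInfOfIdempotentCoatoms (⊤ : Submodule A A) :=
  ⟨0, Fin.elim0, fun j => j.elim0, fun j => j.elim0, (iInf_of_empty _).symm⟩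

theorem IsInfOfIdempotentCoatoms.span_singleton_inf {L : Submodule A A}
    (hL : IsInfOfIdempotentCoatoms L) {q : A} (hq : IsIdempotentElem q)
    (hqM : IsCoatom (span A {q})) : IsInfOfIdempotentCoatoms (span A {q} ⊓ L) := by
  obtain ⟨n, p, hp, hpM, rfl⟩ := hL
  refine ⟨n + 1, Fin.cons q p, Fin.cases hq hp, Fin.cases hqM hpM, ?_⟩
  ext x
  simp [mem_iInf, Fin.forall_fin_succ]

theorem isInfOfIdempotentCoatoms_of_sup_finset_sup_eq_top (F : Finset (Submodule A A))
    (hF : ∀ I ∈ F, IsAtom I) {L : Submodule A A} (hLF : L ⊔ F.sup id = ⊤) :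
    IsInfOfIdempotentCoatoms L := by
  classical
  induction F using Finset.strongInduction generalizing L with
  | H F ih =>
  rcases eq_or_ne L ⊤ with rfl | hL
  · exact isInfOfIdempotentCoatoms_top
  obtain ⟨M, hM, hLM⟩ := Ideal.exists_le_maximal L hL
  obtain ⟨I, hI, hIM⟩ : ∃ I ∈ F, ¬ I ≤ M := by
    by_contra! h
    exact hM.ne_top (top_unique (hLF ▸ sup_le hLM (Finset.sup_le h)))
  have hMI : IsCompl M I :=
    ⟨((hF I hI).not_le_iff_disjoint.mp hIM).symm, hM.out.not_le_iff_codisjoint.mp hIM⟩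
  obtain ⟨q, hq, hqM⟩ := exists_isIdempotentElem_span_eq_of_isCompl hMI
  have hLI : IsInfOfIdempotentCoatoms (L ⊔ I) := by
    refine ih _ (Finset.erase_ssubset hI) (fun J hJ => hF J (Finset.mem_of_mem_erase hJ)) ?_
    have hF_split := Finset.sup_insert (f := id) (b := I) (s := F.erase I)
    rw [Finset.insert_erase hI] at hF_split
    rw [sup_assoc, ← hLF]
    exact congrArg (L ⊔ ·) hF_split.symm
  have hL_eq : L = span A {q} ⊓ (L ⊔ I) := by
    rw [hqM, inf_comm, sup_inf_assoc_of_le I hLM, inf_comm, hMI.inf_eq_bot, sup_bot_eq]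
  exact hL_eq ▸ hLI.span_singleton_inf hq (hqM ▸ hM.out)

theorem isInfOfIdempotentCoatoms_of_sup_socle_eq_top {L : Submodule A A}
    (h : L ⊔ socle A = ⊤) : IsInfOfIdempotentCoatoms L := by
  classical
  have htop : ⊤ ≤ sSup (insert L {I | IsAtom I}) := by rw [sSup_insert]; exact h.ge
  obtain ⟨F, hF, hFtop⟩ := (CompleteLattice.isCompactElement_iff_exists_le_sSup_of_le_sSup _ _).mp
    Ideal.isCompactElement_top _ htop
  refine isInfOfIdempotentCoatoms_of_sup_finset_sup_eq_top (F.erase L)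
    (fun I hI => (hF (Finset.mem_of_mem_erase hI)).resolve_left (Finset.ne_of_mem_erase hI))
    (top_unique (hFtop.trans (Finset.sup_le fun I hI => ?_)))
  rcases eq_or_ne I L with rfl | hIL
  · exact le_sup_left
  · exact le_sup_of_le_right (Finset.le_sup (f := id) (Finset.mem_erase.mpr ⟨hIL, hI⟩))

theorem IsInfOfIdempotentCoatoms.sup_socle_eq_top {L : Submodule A A}
    (hL : IsInfOfIdempotentCoatoms L) : L ⊔ socle A = ⊤ := by
  classical
  obtain ⟨n, p, hp, hpM, rfl⟩ := hL
  obtain ⟨g, hg, hgp⟩ := exists_left_unit_mem_socle (Finset.univ.image fun j => 1 - p j) <|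
    Finset.forall_mem_image.mpr fun j _ =>
      ⟨(hp j).one_sub, (hp j).isCompl_span_singleton_one_sub.isCoatom_iff_isAtom.mp (hpM j)⟩
  have hg_mem : 1 - g ∈ ⨅ j, span A {p j} := by
    refine mem_iInf _ |>.mpr fun j => (hp j).mem_span_singleton_iff.mpr ?_
    have hgp_j := hgp (1 - p j) (Finset.mem_image_of_mem _ (Finset.mem_univ j))
    rw [mul_sub, mul_one] at hgp_j
    rw [sub_mul, one_mul, ← sub_sub_cancel g (g * p j), hgp_j]
    abel
  rw [Ideal.eq_top_iff_one, show (1 : A) = (1 - g) + g by abel]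
  exact add_mem (mem_sup_left hg_mem) (mem_sup_right hg)

end Decomposition

theorem stmt6_general (A : Type*) [Ring A] (L : Submodule A A) :
    IsFredholmLeftIdeal L ↔
      ∃ n : ℕ, ∃ p : Fin n → A, (∀ j, IsIdempotentElem (p j)) ∧
        (∀ j, IsCoatom (Submodule.span A {p j})) ∧ L = ⨅ j, Submodule.span A {p j} := by
  rw [isFredholmLeftIdeal_iff_sup_socle_eq_top]
  exact ⟨isInfOfIdempotentCoatoms_of_sup_socle_eq_top, IsInfOfIdempotentCoatoms.sup_socle_eq_top⟩

theorem stmt6 (A : Type*) [Ring A] (hA : IsSemiprimeRing A) (L : Submodule A A) :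
    IsFredholmLeftIdeal L ↔
      ∃ n : ℕ, ∃ p : Fin n → A, (∀ j, IsIdempotentElem (p j)) ∧
        (∀ j, IsCoatom (Submodule.span A {p j})) ∧ L = ⨅ j, Submodule.span A {p j} :=
  stmt6_general A L
end

section
/- Let A be a unital ring and L ⊊ A a proper left ideal such that A/L is a semisimple left A-module. Then there exists q ∈ A \ L such that L + A(1-q) is a maximal left ideal and Lq ⊆ L. -/
/-!
Write `M = A ⧸ L`. Since `M` is semisimple and nonzero, it has a simple submodule `S` with a
complement `C`, and `C` is then a maximal submodule. Every endomorphism `f` of the cyclic module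
`M` is right multiplication by a lift `q` of `f 1̄`, i.e. `f x̄ = (x q)‾`; in particular `L q ⊆ L`.
For `f` the projection onto `S` along `C`, `q ∉ L` because `f ≠ 0`, and idempotency of `f` shows
that the preimage of `ker f = C` in `A` is `L + A(1 - q)`, which is therefore a maximal left ideal.
-/

open MulOpposite Submodule

namespace Submodule.Quotient

variable {A : Type*} [Ring A] {L : Submodule A A} (f : Module.End A (A ⧸ L)) {q : A}

theorem endomorphism_apply_mk (hq : mk q = f (mk 1)) (x : A) : f (mk x) = mk (x * q) := by
  rw [← smul_eq_mul, mk_smul, hq, ← map_smul, ← mk_smul, smul_eq_mul, mul_one]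

theorem mul_mem_of_endomorphism (hq : mk q = f (mk 1)) {x : A} (hx : x ∈ L) : x * q ∈ L := by
  rw [← mk_eq_zero, ← endomorphism_apply_mk f hq, (mk_eq_zero L).2 hx, map_zero]

theorem notMem_of_endomorphism_ne_zero (hf : f ≠ 0) (hq : mk q = f (mk 1)) : q ∉ L := by
  intro hqL
  refine hf (LinearMap.ext fun v => ?_)
  obtain ⟨x, rfl⟩ := mk_surjective L v
  rw [endomorphism_apply_mk f hq, LinearMap.zero_apply, mk_eq_zero]
  exact L.smul_mem x hqL

theorem comap_mkQ_ker_eq_sup_span (hf : IsIdempotentElem f) (hq : mk q = f (mk 1)) :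
    comap L.mkQ (LinearMap.ker f) = L ⊔ span A {1 - q} := by
  apply le_antisymm
  · intro x hx
    have hxq : x * q ∈ L := (mk_eq_zero L).1 ((endomorphism_apply_mk f hq x).symm.trans hx)
    have hsplit : x = x * q + x • (1 - q) := by rw [smul_eq_mul, mul_sub, mul_one]; abel
    rw [hsplit]
    exact add_mem_sup hxq (smul_mem _ x (mem_span_singleton_self _))
  · have hL : L ≤ comap L.mkQ (LinearMap.ker f) := (ker_mkQ L).ge.trans (LinearMap.ker_le_comap _)
    have hfixed : f (mk q) = mk q := by rw [hq, ← Module.End.mul_apply, hf.eq]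
    refine sup_le hL (span_le.2 (Set.singleton_subset_iff.2 ?_))
    rw [SetLike.mem_coe, mem_comap, LinearMap.mem_ker, mkQ_apply, mk_sub, map_sub, hfixed, hq,
      sub_self]

end Submodule.Quotient

theorem stmt11 (A : Type*) [Ring A] (L : Submodule A A) (hL : L ≠ ⊤)
    (hss : IsSemisimpleModule A (A ⧸ L)) :
    ∃ q : A, q ∉ L ∧ IsCoatom (L ⊔ Submodule.span A {1 - q}) ∧ ∀ x ∈ L, x * q ∈ L := by
  have : Nontrivial (A ⧸ L) := Quotient.nontrivial_iff.mpr hL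
  obtain ⟨S, hS⟩ := IsAtomic.exists_atom (Submodule A (A ⧸ L))
  obtain ⟨C, hC⟩ := exists_isCompl S
  set f := S.projection C hC
  obtain ⟨q, hq⟩ := Submodule.Quotient.mk_surjective L (f (Submodule.Quotient.mk 1))
  have hf : f ≠ 0 := fun h => hS.1 (by simpa [f, h] using (range_projection hC).symm)
  refine ⟨q, Quotient.notMem_of_endomorphism_ne_zero f hf hq, ?_,
    fun x => Quotient.mul_mem_of_endomorphism f hq⟩
  rw [← Quotient.comap_mkQ_ker_eq_sup_span f (isIdempotentElem_projection hC) hq,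
    isCoatom_comap_iff (mkQ_surjective L), ker_projection]
  exact hC.symm.isCoatom_iff_isAtom.mpr hS
end

section
/- Let A be a unital C*-algebra and L ⊆ A a finitely generated left ideal such that the left A-module A/L is Noetherian. Then every left ideal I with L ⊆ I ⊆ A is generated by an idempotent; in particular L = A(1-p) for an idempotent p ∈ soc(A), i.e., L is a Fredholm left ideal and A/L is semisimple. -/
/-
Let `J = A x₁ + ⋯ + A xₙ` be a closed left ideal and `h = ∑ xᵢ* xᵢ`. Every `xᵢ` lies in the closure
of `A h`, and by the open mapping theorem the coefficients of `y = ∑ aᵢ xᵢ ∈ J` can be chosen with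
`‖aᵢ‖ ≤ C ‖y‖`. Testing this on elements `f(h)` of `A h` against cut-offs `e(h)` with `‖xᵢ e(h)‖`
small shows that `0` is isolated in the spectrum of `h`, so the spectral projection `p` of `h` onto
its nonzero spectrum satisfies `J = A p`.

As `A / L` is Noetherian, for a left ideal `I ⊇ L` the closure of `I` is finitely generated, hence
of the form `A p`, and an element of `I` within distance `1` of `p` forces `I = A p`. Left ideals
above `L` being generated by idempotents makes every submodule of `A / L` a direct summand, and for
`L = A q` the left ideal `A (1 - q) ≅ A / L` is semisimple, so `1 - q` lies in the socle.
-/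

open MulOpposite Submodule

namespace IsIdempotentElem

variable {R : Type*} [Ring R] {e : R}

theorem mem_span_singleton_iff_s17 (he : IsIdempotentElem e) {a : R} :
    a ∈ span R {e} ↔ a * e = a := by
  refine ⟨fun ha => ?_, fun ha => mem_span_singleton.mpr ⟨a, ha⟩⟩
  obtain ⟨b, rfl⟩ := mem_span_singleton.mp ha
  rw [smul_eq_mul, mul_assoc, he.eq]

theorem isCompl_span_singleton_one_sub_s17 (he : IsIdempotentElem e) :
    IsCompl (span R {e}) (span R {1 - e}) := by
  refine ⟨disjoint_def.mpr fun a hae ha1e => ?_, codisjoint_iff.mpr (eq_top_iff.mpr fun a _ => ?_)⟩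
  · rw [he.mem_span_singleton_iff_s17] at hae
    rw [he.one_sub.mem_span_singleton_iff_s17, mul_sub, mul_one, hae, sub_self] at ha1e
    exact ha1e.symm
  · rw [mem_sup]
    exact ⟨a * e, mem_span_singleton.mpr ⟨a, rfl⟩, a * (1 - e), mem_span_singleton.mpr ⟨a, rfl⟩,
      by rw [← mul_add, add_sub_cancel, mul_one]⟩

theorem isFredholmElem (he : IsIdempotentElem e) (h : 1 - e ∈ socle R) : IsFredholmElem e := by
  have : e * e - 1 ∈ socle R := by rw [he.eq, ← neg_sub]; exact neg_mem h
  exact ⟨e, this, this⟩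

end IsIdempotentElem

theorem Submodule.FG.of_le_of_isNoetherian_quotient {R M : Type*} [Ring R] [AddCommGroup M]
    [Module R M] {L I : Submodule R M} (hL : L.FG) [IsNoetherian R (M ⧸ L)] (hLI : L ≤ I) :
    I.FG :=
  fg_of_fg_map_of_fg_inf_ker L.mkQ (IsNoetherian.noetherian _)
    (by rwa [ker_mkQ, inf_eq_right.mpr hLI])

theorem isSemisimpleModule_quotient_of_forall_eq_span_idempotent {R : Type*} [Ring R]
    (L : Submodule R R) (h : ∀ I, L ≤ I → ∃ e : R, IsIdempotentElem e ∧ I = span R {e}) :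
    IsSemisimpleModule R (R ⧸ L) := by
  rw [isSemisimpleModule_iff, (comapMkQRelIso L).complementedLattice_iff]
  refine ⟨fun ⟨I, hLI⟩ => ?_⟩
  obtain ⟨e, he, rfl⟩ := h I hLI
  have hcompl := he.isCompl_span_singleton_one_sub_s17
  refine ⟨⟨L ⊔ span R {1 - e}, Set.mem_Ici.mpr le_sup_left⟩, Set.Ici.isCompl_iff.mpr ⟨?_, ?_⟩⟩
  · change span R {e} ⊓ (L ⊔ span R {1 - e}) = L
    rw [inf_comm, sup_inf_assoc_of_le _ hLI, inf_comm, hcompl.inf_eq_bot, sup_bot_eq]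
  · exact hcompl.codisjoint.mono_right le_sup_right

theorem le_socle_of_isSemisimpleModule {R : Type*} [Ring R] (N : Submodule R R)
    [IsSemisimpleModule R N] : N ≤ socle R := by
  have hN : N = map N.subtype ⊤ := by rw [Submodule.map_top, range_subtype]
  rw [socle, hN, ← IsSemisimpleModule.sSup_simples_eq_top, sSup_eq_iSup', Submodule.map_iSup]
  refine iSup_le fun ⟨m, hm⟩ => le_sSup (isSimpleModule_iff_isAtom.mp ?_)
  have : IsSimpleModule R m := hm
  exact IsSimpleModule.congr (equivMapOfInjective N.subtype N.injective_subtype m).symm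

theorem IsIdempotentElem.one_sub_mem_socle {R : Type*} [Ring R] {e : R} (he : IsIdempotentElem e)
    [IsSemisimpleModule R (R ⧸ span R {e})] : 1 - e ∈ socle R := by
  have hker : span R {e} ≤ LinearMap.ker (LinearMap.toSpanSingleton R R (1 - e)) := by
    rw [span_le, Set.singleton_subset_iff, SetLike.mem_coe, LinearMap.mem_ker,
      LinearMap.toSpanSingleton_apply, smul_eq_mul, mul_sub, mul_one, he.eq, sub_self]
  have hrange : LinearMap.range ((span R {e}).liftQ _ hker) = span R {1 - e} := by
    rw [range_liftQ, ← LinearMap.span_singleton_eq_range]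
  have := IsSemisimpleModule.range ((span R {e}).liftQ _ hker)
  rw [hrange] at this
  exact le_socle_of_isSemisimpleModule _ (mem_span_singleton_self _)

theorem IsIdempotentElem.isClosed_span_singleton {R : Type*} [Ring R] [TopologicalSpace R]
    [ContinuousMul R] [T2Space R] {e : R} (he : IsIdempotentElem e) :
    IsClosed (span R {e} : Set R) := by
  have : (span R {e} : Set R) = {a | a * e = a} := Set.ext fun _ => he.mem_span_singleton_iff_s17
  rw [this]
  exact isClosed_eq (continuous_mul_const e) continuous_id

section BanachAlgebra

variable {A : Type*} [NormedRing A]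

/-- `1 - p (p - x) p` is a unit, and it multiplies `p` into `p x ∈ I`. -/
theorem eq_span_singleton_of_norm_sub_lt_one [CompleteSpace A] {I : Submodule A A} {p x : A}
    (hp : IsIdempotentElem p) (hpn : ‖p‖ ≤ 1) (hIp : I ≤ span A {p}) (hx : x ∈ I)
    (hxp : ‖x - p‖ < 1) : I = span A {p} := by
  have hxp_eq : x * p = x := hp.mem_span_singleton_iff_s17.mp (hIp hx)
  have hz : ‖p * (p - x) * p‖ < 1 :=
    calc ‖p * (p - x) * p‖ ≤ ‖p‖ * ‖p - x‖ * ‖p‖ := norm_mul₃_le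
      _ ≤ 1 * ‖p - x‖ * 1 := by gcongr
      _ < 1 := by rw [one_mul, mul_one, norm_sub_rev]; exact hxp
  set u := Units.oneSub _ hz
  have hup : (u : A) * p = p * x := by
    change (1 - p * (p - x) * p) * p = p * x
    simp only [mul_sub, sub_mul, mul_assoc, hp.eq, hxp_eq, one_mul]
    abel
  have hpI : p ∈ I := by
    rw [← u.inv_mul_cancel_left p, hup, ← mul_assoc]
    exact I.smul_mem _ hx
  exact le_antisymm hIp (span_le.mpr (Set.singleton_subset_iff.mpr hpI))

theorem exists_span_range_coeffs_norm_le [CompleteSpace A] (𝕜 : Type*) [NontriviallyNormedField 𝕜]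
    [NormedAlgebra 𝕜 A] {ι : Type*} [Fintype ι] (x : ι → A) (hJ : IsClosed (span A (Set.range x) : Set A)) :
    ∃ C > 0, ∀ y ∈ span A (Set.range x), ∃ a : ι → A, ∑ i, a i * x i = y ∧ ‖a‖ ≤ C * ‖y‖ := by
  set J := (span A (Set.range x)).restrictScalars 𝕜
  have : CompleteSpace J := hJ.completeSpace_coe
  let T : (ι → A) →L[𝕜] A :=
    ∑ i, ((ContinuousLinearMap.mul 𝕜 A).flip (x i)).comp (ContinuousLinearMap.proj i)
  have hT : ∀ a, T a = ∑ i, a i * x i := fun a => by simp [T]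
  have hTJ : ∀ a, T a ∈ J := fun a => by
    rw [hT]
    exact sum_mem fun i _ => (span A _).smul_mem (a i) (subset_span ⟨i, rfl⟩)
  have hsurj : Function.Surjective (T.codRestrict J hTJ) := by
    rintro ⟨y, hy⟩
    obtain ⟨a, ha⟩ := (mem_span_range_iff_exists_fun A).mp hy
    exact ⟨a, Subtype.ext (by simpa [hT] using ha)⟩
  obtain ⟨C, hC, hCy⟩ := (T.codRestrict J hTJ).exists_preimage_norm_le hsurj
  refine ⟨C, hC, fun y hy => ?_⟩
  obtain ⟨a, ha, hna⟩ := hCy ⟨y, hy⟩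
  exact ⟨a, by rw [← hT]; exact congrArg Subtype.val ha, hna⟩

theorem norm_le_of_mul_eq_self {ι : Type*} [Fintype ι] {x : ι → A} {C s : ℝ}
    (hC : ∀ y ∈ span A (Set.range x), ∃ a : ι → A, ∑ i, a i * x i = y ∧ ‖a‖ ≤ C * ‖y‖)
    {y d : A} (hy : y ∈ span A (Set.range x)) (hyd : y * d = y) (hxd : ∀ i, ‖x i * d‖ ≤ s) :
    ‖y‖ ≤ Fintype.card ι * (C * ‖y‖ * s) := by
  obtain ⟨a, rfl, ha⟩ := hC y hy
  calc ‖∑ i, a i * x i‖ = ‖∑ i, a i * (x i * d)‖ := by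
        rw [← hyd, Finset.sum_mul]; simp only [mul_assoc]
    _ ≤ ∑ i, ‖a i‖ * ‖x i * d‖ := norm_sum_le_of_le _ fun i _ => norm_mul_le _ _
    _ ≤ ∑ _i : ι, C * ‖∑ i, a i * x i‖ * s := Finset.sum_le_sum fun i _ =>
        mul_le_mul ((norm_le_pi_norm a i).trans ha) (hxd i) (norm_nonneg _)
          ((norm_nonneg _).trans ((norm_le_pi_norm a i).trans ha))
    _ = Fintype.card ι * (C * ‖∑ i, a i * x i‖ * s) := by
        rw [Finset.sum_const, Finset.card_univ, nsmul_eq_mul]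

end BanachAlgebra

section CStarAlgebra

variable {A : Type*} [CStarAlgebra A]

theorem cfc_mul_id_mem_span_singleton (g : ℝ → ℝ) {h : A} (hh : IsSelfAdjoint h)
    (hg : ContinuousOn g (spectrum ℝ h) := by cfc_cont_tac) :
    cfc (fun t => g t * t) h ∈ span A {h} := by
  rw [cfc_mul g (fun t => t) h, cfc_id' ℝ h]
  exact mem_span_singleton.mpr ⟨_, rfl⟩

theorem exists_isIdempotentElem_of_spectrum_gap {h : A} (hh : IsSelfAdjoint h) {ε : ℝ}
    (hε : 0 < ε) (hgap : ∀ t ∈ spectrum ℝ h, t = 0 ∨ ε ≤ t) :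
    ∃ p : A, IsIdempotentElem p ∧ ‖p‖ ≤ 1 ∧ p ∈ span A {h} ∧ h * p = h := by
  set f : ℝ → ℝ := fun t => (max ε t)⁻¹ * t
  have hcont : Continuous fun t : ℝ => (max ε t)⁻¹ :=
    (continuous_const.max continuous_id).inv₀ fun t => (lt_max_of_lt_left hε).ne'
  have hfc : ContinuousOn f (spectrum ℝ h) := (hcont.mul continuous_id).continuousOn
  have hf : ∀ t ∈ spectrum ℝ h, (t = 0 ∧ f t = 0) ∨ f t = 1 := fun t ht =>
    (hgap t ht).imp (fun ht0 => ⟨ht0, by simp [f, ht0]⟩)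
      fun hεt => by simp only [f, max_eq_right hεt, inv_mul_cancel₀ (hε.trans_le hεt).ne']
  refine ⟨cfc f h, ?_, ?_, cfc_mul_id_mem_span_singleton _ hh hcont.continuousOn, ?_⟩
  · rw [IsIdempotentElem, ← cfc_mul f f h hfc hfc]
    refine cfc_congr fun t ht => ?_
    rcases hf t ht with ⟨-, hft⟩ | hft <;> simp [hft]
  · refine norm_cfc_le zero_le_one fun t ht => ?_
    rcases hf t ht with ⟨-, hft⟩ | hft <;> simp [hft]
  · nth_rw 1 [← cfc_id' ℝ h]
    rw [← cfc_mul (fun t => t) f h (continuousOn_id' _) hfc]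
    refine (cfc_congr fun t ht => ?_).trans (cfc_id' ℝ h)
    rcases hf t ht with ⟨ht0, -⟩ | hft <;> simp [*]

theorem span_sum_star_mul_self_le {ι : Type*} [Fintype ι] (x : ι → A) :
    span A {∑ i, star (x i) * x i} ≤ span A (Set.range x) :=
  span_le.mpr <| Set.singleton_subset_iff.mpr <|
    sum_mem fun i _ => smul_mem _ _ (subset_span ⟨i, rfl⟩)

section Order

variable [PartialOrder A] [StarOrderedRing A]

theorem norm_mul_cfc_sq_le {h v : A} (hh : 0 ≤ h) (hv : star v * v ≤ h) {g : ℝ → ℝ} {δ : ℝ}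
    (hδ : 0 ≤ δ) (hgδ : ∀ t ∈ spectrum ℝ h, g t * t * g t ≤ δ)
    (hg : ContinuousOn g (spectrum ℝ h) := by cfc_cont_tac) :
    ‖v * cfc g h‖ ^ 2 ≤ δ := by
  set d := cfc g h
  have hd : star d * h * d = cfc (fun t => g t * t * g t) h := by
    rw [(cfc_predicate g h : IsSelfAdjoint d).star_eq, cfc_mul _ g h, cfc_mul g (fun t => t) h,
      cfc_id' ℝ h]
  calc ‖v * d‖ ^ 2 = ‖star d * (star v * v) * d‖ := by
        rw [sq, ← CStarRing.norm_star_mul_self, star_mul]; simp only [mul_assoc]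
    _ ≤ ‖star d * h * d‖ := CStarAlgebra.norm_le_norm_of_nonneg_of_le
        (star_left_conjugate_nonneg (star_mul_self_nonneg v) d)
        (star_left_conjugate_le_conjugate hv d)
    _ ≤ δ := by
        rw [hd]
        refine norm_cfc_le hδ fun t ht => ?_
        have ht0 := spectrum_nonneg_of_nonneg hh ht
        rw [Real.norm_eq_abs, abs_of_nonneg (by nlinarith [mul_nonneg ht0 (mul_self_nonneg (g t))])]
        exact hgδ t ht

theorem mem_closure_span_singleton_of_star_mul_self_le {h v : A} (hh : 0 ≤ h)
    (hv : star v * v ≤ h) : v ∈ closure (span A {h} : Set A) := by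
  refine Metric.mem_closure_iff.mpr fun δ hδ => ?_
  set u := δ ^ 2 / 2
  have hu : 0 < u := by positivity
  have hspec : ∀ t ∈ spectrum ℝ h, 0 ≤ t := fun t ht => spectrum_nonneg_of_nonneg hh ht
  have hcont : ContinuousOn (fun t : ℝ => (u + t)⁻¹) (spectrum ℝ h) :=
    ContinuousOn.inv₀ (by fun_prop) fun t ht => by linarith [hspec t ht]
  refine ⟨v * cfc (fun t => (u + t)⁻¹ * t) h,
    (span A {h}).smul_mem v (cfc_mul_id_mem_span_singleton _ hh.isSelfAdjoint), ?_⟩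
  have hsub : 1 - cfc (fun t => (u + t)⁻¹ * t) h = cfc (fun t => u * (u + t)⁻¹) h := by
    rw [← cfc_one ℝ h, ← cfc_sub _ _ h]
    refine cfc_congr fun t ht => ?_
    simp only [Pi.one_apply]
    field_simp [(by linarith [hspec t ht] : u + t ≠ 0)]
    ring
  have hest : ‖v * cfc (fun t => u * (u + t)⁻¹) h‖ ^ 2 ≤ u := by
    refine norm_mul_cfc_sq_le hh hv hu.le fun t ht => ?_
    have ht0 := hspec t ht
    rw [← div_eq_mul_inv, div_mul_eq_mul_div, div_mul_div_comm, div_le_iff₀ (by positivity)]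
    nlinarith [mul_nonneg hu.le (sq_nonneg (u + t)), mul_nonneg (mul_nonneg hu.le hu.le) ht0]
  rw [dist_eq_norm, ← mul_one_sub, hsub]
  exact lt_of_pow_lt_pow_left₀ 2 hδ.le (hest.trans_lt (by simp only [u]; linarith [pow_pos hδ 2]))

theorem star_mul_self_le_sum {ι : Type*} [Fintype ι] (x : ι → A) (i : ι) :
    star (x i) * x i ≤ ∑ j, star (x j) * x j :=
  Finset.single_le_sum (f := fun j => star (x j) * x j)
    (fun j _ => star_mul_self_nonneg (x j)) (Finset.mem_univ i)

theorem exists_spectrum_sum_star_mul_self_gap {ι : Type*} [Fintype ι] {x : ι → A} {C : ℝ}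
    (hC0 : 0 ≤ C)
    (hC : ∀ y ∈ span A (Set.range x), ∃ a : ι → A, ∑ i, a i * x i = y ∧ ‖a‖ ≤ C * ‖y‖) :
    ∃ ε > 0, ∀ t ∈ spectrum ℝ (∑ i, star (x i) * x i), t = 0 ∨ ε ≤ t := by
  set h := ∑ i, star (x i) * x i
  have hh : 0 ≤ h := Finset.sum_nonneg fun i _ => star_mul_self_nonneg (x i)
  set K := Fintype.card ι * C
  have hK : 0 ≤ K := by positivity
  set s := (K + 1)⁻¹
  have hs : 0 < s := by positivity
  set ε := s ^ 2
  have hε : 0 < ε := by positivity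
  refine ⟨ε, hε, fun t₀ ht₀ => ?_⟩
  by_contra! ht₀ε
  have ht₀pos : 0 < t₀ :=
    lt_of_le_of_ne (spectrum_nonneg_of_nonneg hh ht₀) (Ne.symm ht₀ε.1)
  have hcut : Continuous fun t : ℝ => ε / max ε t :=
    continuous_const.div (continuous_const.max continuous_id) fun t => (lt_max_of_lt_left hε).ne'
  -- `d` is a cut-off equal to `1` on `[0, ε]` with `‖xᵢ d‖ ≤ √ε = s`, and `y ≠ 0` is supported
  -- in `[0, ε]`, so `y = y d`; this contradicts the coefficient bound since `K s < 1`.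
  set d := cfc (fun t => ε / max ε t) h
  set y := cfc (fun t => max 0 (ε - t) * t) h
  have hyJ : y ∈ span A (Set.range x) :=
    span_sum_star_mul_self_le x (cfc_mul_id_mem_span_singleton _ hh.isSelfAdjoint)
  have hy : 0 < ‖y‖ := by
    refine lt_of_lt_of_le ?_ (norm_apply_le_norm_cfc _ h ht₀)
    rw [max_eq_right (by linarith [ht₀ε.2])]
    exact norm_pos_iff.mpr (mul_pos (by linarith [ht₀ε.2]) ht₀pos).ne'
  have hyd : y * d = y := by
    rw [← cfc_mul _ _ h (by fun_prop) hcut.continuousOn]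
    refine cfc_congr fun t _ => ?_
    rcases le_total t ε with htε | hεt
    · rw [max_eq_left htε, div_self hε.ne', mul_one]
    · rw [max_eq_left (by linarith), zero_mul, zero_mul]
  have hxd : ∀ i, ‖x i * d‖ ≤ s := fun i => by
    refine (pow_le_pow_iff_left₀ (norm_nonneg _) hs.le two_ne_zero).mp ?_
    refine norm_mul_cfc_sq_le hh (star_mul_self_le_sum x i) hε.le (fun t ht => ?_) hcut.continuousOn
    have ht0 := spectrum_nonneg_of_nonneg hh ht
    have hm : 0 < max ε t := lt_max_of_lt_left hε
    rw [div_mul_eq_mul_div, div_mul_div_comm, div_le_iff₀ (by positivity)]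
    nlinarith [le_max_left ε t, le_max_right ε t, mul_le_mul (le_max_left ε t) (le_max_right ε t)
      ht0 hm.le]
  have hle := norm_le_of_mul_eq_self hC hyJ hyd hxd
  have hKs : K * s < 1 := by
    rw [← div_eq_mul_inv, div_lt_one (by positivity)]
    linarith
  have hKy : Fintype.card ι * (C * ‖y‖ * s) = K * s * ‖y‖ := by simp only [K]; ring
  nlinarith [mul_lt_mul_of_pos_right hKs hy]

end Order

theorem exists_isIdempotentElem_eq_span_of_fg_of_isClosed {J : Submodule A A} (hJ : J.FG)
    (hJc : IsClosed (J : Set A)) : ∃ p : A, IsIdempotentElem p ∧ ‖p‖ ≤ 1 ∧ J = span A {p} := by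
  let _ := CStarAlgebra.spectralOrder A
  let _ := CStarAlgebra.spectralOrderedRing A
  obtain ⟨n, x, rfl⟩ := fg_iff_exists_fin_generating_family.mp hJ
  obtain ⟨C, hC, hCx⟩ := exists_span_range_coeffs_norm_le ℂ x hJc
  obtain ⟨ε, hε, hgap⟩ := exists_spectrum_sum_star_mul_self_gap hC.le hCx
  have hh : 0 ≤ ∑ i, star (x i) * x i := Finset.sum_nonneg fun i _ => star_mul_self_nonneg (x i)
  obtain ⟨p, hp, hpn, hph, hhp⟩ := exists_isIdempotentElem_of_spectrum_gap hh.isSelfAdjoint hε hgap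
  have hclosure : closure (span A {∑ i, star (x i) * x i} : Set A) ⊆ span A {p} :=
    closure_minimal (span_le.mpr (Set.singleton_subset_iff.mpr (hp.mem_span_singleton_iff_s17.mpr hhp)))
      hp.isClosed_span_singleton
  refine ⟨p, hp, hpn, le_antisymm ?_ (span_le.mpr (Set.singleton_subset_iff.mpr
    (span_sum_star_mul_self_le x hph)))⟩
  exact span_le.mpr (Set.range_subset_iff.mpr fun i =>
    hclosure (mem_closure_span_singleton_of_star_mul_self_le hh (star_mul_self_le_sum x i)))

theorem exists_isIdempotentElem_eq_span_of_fg_topologicalClosure {I : Submodule A A}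
    (hI : I.topologicalClosure.FG) : ∃ p : A, IsIdempotentElem p ∧ I = span A {p} := by
  obtain ⟨p, hp, hpn, hIp⟩ :=
    exists_isIdempotentElem_eq_span_of_fg_of_isClosed hI I.isClosed_topologicalClosure
  have hpI : p ∈ closure (I : Set A) := by
    rw [← I.topologicalClosure_coe, hIp]
    exact mem_span_singleton_self p
  obtain ⟨x, hx, hpx⟩ := Metric.mem_closure_iff.mp hpI 1 one_pos
  refine ⟨p, hp, eq_span_singleton_of_norm_sub_lt_one hp hpn (hIp ▸ I.le_topologicalClosure) hx ?_⟩
  rwa [← dist_eq_norm, dist_comm]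

end CStarAlgebra

theorem stmt17 (A : Type*) [CStarAlgebra A] (L : Submodule A A) (hFG : L.FG)
    (hN : IsNoetherian A (A ⧸ L)) :
    (∀ I : Submodule A A, L ≤ I → ∃ p : A, IsIdempotentElem p ∧ I = Submodule.span A {p}) ∧
    (∃ p : A, IsIdempotentElem p ∧ p ∈ socle A ∧ L = Submodule.span A {1 - p}) ∧
    IsFredholmLeftIdeal L ∧ IsSemisimpleModule A (A ⧸ L) := by
  have hI : ∀ I : Submodule A A, L ≤ I → ∃ p : A, IsIdempotentElem p ∧ I = span A {p} :=
    fun I hLI => exists_isIdempotentElem_eq_span_of_fg_topologicalClosure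
      (hFG.of_le_of_isNoetherian_quotient (hLI.trans I.le_topologicalClosure))
  have hss := isSemisimpleModule_quotient_of_forall_eq_span_idempotent L hI
  obtain ⟨q, hq, rfl⟩ := hI L le_rfl
  have hsoc := hq.one_sub_mem_socle
  exact ⟨hI, ⟨1 - q, hq.one_sub, hsoc, by rw [sub_sub_cancel]⟩,
    ⟨q, mem_span_singleton_self q, hq.isFredholmElem hsoc⟩, hss⟩
end
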